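/- arXiv:1107.3719 — 3 statements merged into one kernel-verified Lean document; each statement's English description precedes it below -/
import Mathlib

section
/- Suppose p and q are K-close (λ,ε)-quasigeodesic paths in a δ-hyperbolic geodesic metric space that originate from points p₀ and q₀, respectively, with dist(p₀,q₀) ≤ K. Then p and q asynchronously K'-fellow travel for some constant K' = K'(δ,λ,ε,K) depending only on δ, λ, ε and K. -/
open Filter Set

section DEFS

/-- `p` is a `(λ, ε)`-quasigeodesic on the parameter set `s`:
`|a − b|/λ − ε ≤ dist (p a) (p b) ≤ λ|a − b| + ε` for all parameters `a, b ∈ s`. -/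
def IsQGOn {X : Type*} [MetricSpace X] (lam eps : ℝ) (p : ℝ → X) (s : Set ℝ) : Prop :=
  ∀ a ∈ s, ∀ b ∈ s,
    |a - b| / lam - eps ≤ dist (p a) (p b) ∧ dist (p a) (p b) ≤ lam * |a - b| + eps

/-- `p` is a geodesic on the parameter set `s`. -/
def IsGeodOn {X : Type*} [MetricSpace X] (p : ℝ → X) (s : Set ℝ) : Prop :=
  ∀ a ∈ s, ∀ b ∈ s, dist (p a) (p b) = |a - b|

/-- `p` is a geodesic path from `x` to `y`, parameterized by arclength on `[0, dist x y]`. -/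
def GeodFromTo {X : Type*} [MetricSpace X] (p : ℝ → X) (x y : X) : Prop :=
  p 0 = x ∧ p (dist x y) = y ∧ IsGeodOn p (Set.Icc 0 (dist x y))

/-- `X` is a geodesic metric space. -/
def GeodesicSpace (X : Type*) [MetricSpace X] : Prop :=
  ∀ x y : X, ∃ p : ℝ → X, GeodFromTo p x y

/-- All geodesic triangles of `X` are `δ`-thin: each side is contained in the closed
`δ`-neighborhood of the union of the other two sides. -/
def SlimTriangles (X : Type*) [MetricSpace X] (δ : ℝ) : Prop :=
  ∀ (x y z : X) (p q r : ℝ → X),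
    GeodFromTo p x y → GeodFromTo q y z → GeodFromTo r x z →
    ∀ t ∈ Set.Icc (0 : ℝ) (dist x y),
      Metric.infDist (p t) (q '' Set.Icc 0 (dist y z) ∪ r '' Set.Icc 0 (dist x z)) ≤ δ

/-- A path defined on `[0, T]`, extended to all of `ℝ` by constancy outside `[0, T]`. -/
def IsPathOn {X : Type*} [MetricSpace X] (p : ℝ → X) (T : ℝ) : Prop :=
  (∀ t ≤ (0 : ℝ), p t = p 0) ∧ ∀ t ≥ T, p t = p T

/-- Two subsets of `X` are `K`-close: each is contained in the closed `K`-neighborhood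
of the other. -/
def KClose {X : Type*} [MetricSpace X] (K : ℝ) (Y Z : Set X) : Prop :=
  (∀ y ∈ Y, Metric.infDist y Z ≤ K) ∧ ∀ z ∈ Z, Metric.infDist z Y ≤ K

/-- The paths `p` and `q` asynchronously `K`-fellow travel: there are non-decreasing
proper continuous reparameterizations `φ, ψ : [0,∞) → [0,∞)` with
`dist (p (φ t)) (q (ψ t)) ≤ K` for all `t ≥ 0`. -/
def AsyncFellowTravel {X : Type*} [MetricSpace X] (K : ℝ) (p q : ℝ → X) : Prop :=
  ∃ φ ψ : ℝ → ℝ,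
    MonotoneOn φ (Set.Ici 0) ∧ ContinuousOn φ (Set.Ici 0) ∧
      Set.MapsTo φ (Set.Ici 0) (Set.Ici 0) ∧ Tendsto φ atTop atTop ∧
    MonotoneOn ψ (Set.Ici 0) ∧ ContinuousOn ψ (Set.Ici 0) ∧
      Set.MapsTo ψ (Set.Ici 0) (Set.Ici 0) ∧ Tendsto ψ atTop atTop ∧
    ∀ t : ℝ, 0 ≤ t → dist (p (φ t)) (q (ψ t)) ≤ K

end DEFS
namespace AFT

variable {X : Type*} [MetricSpace X]

lemma qg_up {lam eps L : ℝ} (hL : lam ≤ L) {p : ℝ → X} {s : Set ℝ}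
    (h : IsQGOn lam eps p s) {a b : ℝ} (ha : a ∈ s) (hb : b ∈ s) :
    dist (p a) (p b) ≤ L * |a - b| + eps := by
  have h2 := (h a ha b hb).2
  nlinarith [abs_nonneg (a - b)]

lemma qg_par {lam eps L : ℝ} (hlam : 0 < lam) (hL : lam ≤ L) (heps : 0 ≤ eps)
    {p : ℝ → X} {s : Set ℝ} (h : IsQGOn lam eps p s) {a b : ℝ} (ha : a ∈ s) (hb : b ∈ s) :
    |a - b| ≤ L * (dist (p a) (p b) + eps) := by
  have h1 := (h a ha b hb).1
  have h2 : |a - b| / lam ≤ dist (p a) (p b) + eps := by linarith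
  rw [div_le_iff₀ hlam] at h2
  nlinarith [dist_nonneg (x := p a) (y := p b)]

noncomputable def aL (lam : ℝ) : ℝ := lam + 1
noncomputable def aK1 (K : ℝ) : ℝ := K + 1
noncomputable def aM (lam eps K : ℝ) : ℝ := aL lam * (2 * aK1 K + aL lam + 2 * eps)
noncomputable def aC (lam eps K : ℝ) : ℝ := aK1 K + aL lam * aM lam eps K + eps
noncomputable def aB (lam eps K : ℝ) : ℝ := aL lam * (2 * aC lam eps K + eps)
noncomputable def aC1 (lam eps K : ℝ) : ℝ := aK1 K + aL lam * aB lam eps K + eps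
noncomputable def aG (lam eps K : ℝ) : ℝ :=
  aL lam * (aC1 lam eps K + aK1 K + aL lam + 2 * eps)
noncomputable def aG2 (lam eps K : ℝ) : ℝ := aL lam * (2 * aC1 lam eps K + eps)
noncomputable def aKC (lam eps K : ℝ) : ℝ :=
  aL lam + eps + aC1 lam eps K + aL lam * (aG lam eps K + aG2 lam eps K) + eps

end AFT


noncomputable def pwl (u : ℕ → ℝ) (t : ℝ) : ℝ :=
  if t < 0 then t else u ⌊t⌋₊ + (t - ⌊t⌋₊) * (u (⌊t⌋₊ + 1) - u ⌊t⌋₊)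

variable {u : ℕ → ℝ}

lemma pwl_of_nonneg (t : ℝ) (ht : 0 ≤ t) :
    pwl u t = u ⌊t⌋₊ + (t - ⌊t⌋₊) * (u (⌊t⌋₊ + 1) - u ⌊t⌋₊) := if_neg (not_lt.2 ht)

lemma pwl_mem (hu : Monotone u) {t : ℝ} (ht : 0 ≤ t) :
    pwl u t ∈ Icc (u ⌊t⌋₊) (u (⌊t⌋₊ + 1)) := by
  rw [pwl_of_nonneg t ht]
  have h1 : (⌊t⌋₊ : ℝ) ≤ t := Nat.floor_le ht
  have h2 : t < ⌊t⌋₊ + 1 := Nat.lt_floor_add_one t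
  have hΔ : 0 ≤ u (⌊t⌋₊ + 1) - u ⌊t⌋₊ := sub_nonneg.2 (hu (Nat.le_succ _))
  constructor
  · nlinarith
  · nlinarith

lemma pwl_monotone (hu : Monotone u) (h0 : u 0 = 0) : Monotone (pwl u) := by
  intro a b hab
  rcases lt_or_ge a 0 with ha | ha
  · rw [pwl, if_pos ha]
    rcases lt_or_ge b 0 with hb | hb
    · rw [pwl, if_pos hb]; exact hab
    · have h2 : u 0 ≤ u ⌊b⌋₊ := hu (Nat.zero_le _)
      have := (pwl_mem hu hb).1
      linarith [h0 ▸ h2, ha.le]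
  · have hb : (0:ℝ) ≤ b := le_trans ha hab
    have hij : ⌊a⌋₊ ≤ ⌊b⌋₊ := Nat.floor_le_floor hab
    rcases eq_or_lt_of_le hij with he | hlt
    · rw [pwl_of_nonneg a ha, pwl_of_nonneg b hb, ← he]
      have hΔ : 0 ≤ u (⌊a⌋₊ + 1) - u ⌊a⌋₊ := sub_nonneg.2 (hu (Nat.le_succ _))
      nlinarith
    · have h1 : pwl u a ≤ u (⌊a⌋₊ + 1) := (pwl_mem hu ha).2
      have h2 : u ⌊b⌋₊ ≤ pwl u b := (pwl_mem hu hb).1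
      have h3 : u (⌊a⌋₊ + 1) ≤ u ⌊b⌋₊ := hu hlt
      linarith

lemma pwl_surjective (hu : Monotone u) (h0 : u 0 = 0) {c : ℝ}
    (hlow : ∀ j : ℕ, (j : ℝ) - c ≤ u j) : Function.Surjective (pwl u) := by
  intro y
  rcases lt_or_ge y 0 with hy | hy
  · exact ⟨y, if_pos hy⟩
  · have hex : ∃ j : ℕ, y < u j := by
      refine ⟨⌈y + c⌉₊ + 1, ?_⟩
      have h1 := hlow (⌈y + c⌉₊ + 1)
      have h2 : y + c ≤ (⌈y + c⌉₊ : ℝ) := Nat.le_ceil _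
      push_cast at h1 ⊢
      linarith
    classical
    have hj0 : Nat.find hex ≠ 0 := by
      intro h
      have := Nat.find_spec hex
      rw [h, h0] at this
      linarith
    obtain ⟨j, hj⟩ := Nat.exists_eq_succ_of_ne_zero hj0
    have hspec : y < u (j + 1) := by have := Nat.find_spec hex; rwa [hj] at this
    have hjy : u j ≤ y := by
      have := Nat.find_min hex (m := j) (by omega)
      push_neg at this; exact this
    have hΔpos : 0 < u (j + 1) - u j := by linarith
    set r : ℝ := (y - u j) / (u (j + 1) - u j) with hr
    have hr0 : 0 ≤ r := div_nonneg (by linarith) hΔpos.le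
    have hr1 : r < 1 := (div_lt_one hΔpos).2 (by linarith)
    have ht0 : (0:ℝ) ≤ (j : ℝ) + r := by positivity
    have hfl : ⌊(j : ℝ) + r⌋₊ = j := by
      rw [Nat.floor_eq_iff (by positivity)]
      constructor
      · linarith
      · push_cast; linarith
    refine ⟨(j : ℝ) + r, ?_⟩
    rw [pwl_of_nonneg _ ht0, hfl]
    have : ((j:ℝ) + r - j) = r := by ring
    rw [this, hr, div_mul_cancel₀ _ hΔpos.ne']
    ring

lemma pwl_tendsto (hu : Monotone u) {c : ℝ} (hlow : ∀ j : ℕ, (j : ℝ) - c ≤ u j) :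
    Tendsto (pwl u) atTop atTop := by
  refine tendsto_atTop_mono' atTop ?_ (tendsto_atTop_add_const_right _ (-(c + 1)) tendsto_id)
  filter_upwards [eventually_ge_atTop (0 : ℝ)] with t ht
  have h1 : u ⌊t⌋₊ ≤ pwl u t := (pwl_mem hu ht).1
  have h2 := hlow ⌊t⌋₊
  have h3 : t < ⌊t⌋₊ + 1 := Nat.lt_floor_add_one t
  simp only [id_eq]
  linarith


namespace AFT

set_option maxHeartbeats 8000000 in
theorem main {X : Type} [MetricSpace X] {lam eps K : ℝ}
    (hlam : 0 < lam) (heps : 0 ≤ eps) (hK : 0 ≤ K) {p q : ℝ → X} {S T : ℝ}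
    (hS : 0 ≤ S) (hT : 0 ≤ T) (hpP : IsPathOn p S) (hqP : IsPathOn q T)
    (hpQ : IsQGOn lam eps p (Set.Icc 0 S)) (hqQ : IsQGOn lam eps q (Set.Icc 0 T))
    (hclose : KClose K (p '' Set.Icc 0 S) (q '' Set.Icc 0 T))
    (h00 : dist (p 0) (q 0) ≤ K) :
    AsyncFellowTravel (aKC lam eps K) p q := by
  classical
  obtain ⟨L, fL⟩ : ∃ x : ℝ, x = aL lam := ⟨_, rfl⟩
  obtain ⟨K1, fK1⟩ : ∃ x : ℝ, x = aK1 K := ⟨_, rfl⟩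
  obtain ⟨M, fM⟩ : ∃ x : ℝ, x = aM lam eps K := ⟨_, rfl⟩
  obtain ⟨C, fC⟩ : ∃ x : ℝ, x = aC lam eps K := ⟨_, rfl⟩
  obtain ⟨B, fB⟩ : ∃ x : ℝ, x = aB lam eps K := ⟨_, rfl⟩
  obtain ⟨C1, fC1⟩ : ∃ x : ℝ, x = aC1 lam eps K := ⟨_, rfl⟩
  obtain ⟨G, fG⟩ : ∃ x : ℝ, x = aG lam eps K := ⟨_, rfl⟩
  obtain ⟨G2, fG2⟩ : ∃ x : ℝ, x = aG2 lam eps K := ⟨_, rfl⟩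
  have eL : L = lam + 1 := by rw [fL]; simp only [aL]
  have eK1 : K1 = K + 1 := by rw [fK1]; simp only [aK1]
  have eM : M = L * (2 * K1 + L + 2 * eps) := by
    rw [fM]; simp only [aM]; rw [← fL, ← fK1]
  have eC : C = K1 + L * M + eps := by
    rw [fC]; simp only [aC]; rw [← fL, ← fK1, ← fM]
  have eB : B = L * (2 * C + eps) := by
    rw [fB]; simp only [aB]; rw [← fL, ← fC]
  have eC1 : C1 = K1 + L * B + eps := by
    rw [fC1]; simp only [aC1]; rw [← fL, ← fK1, ← fB]
  have eG : G = L * (C1 + K1 + L + 2 * eps) := by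
    rw [fG]; simp only [aG]; rw [← fL, ← fK1, ← fC1]
  have eG2 : G2 = L * (2 * C1 + eps) := by
    rw [fG2]; simp only [aG2]; rw [← fL, ← fC1]
  have eKC : aKC lam eps K = L + eps + C1 + L * (G + G2) + eps := by
    simp only [aKC]; rw [← fL, ← fC1, ← fG, ← fG2]
  rw [eKC]
  have hL1 : 1 ≤ L := by rw [eL]; linarith
  have hL0 : (0:ℝ) ≤ L := by linarith
  have hlamL : lam ≤ L := by rw [eL]; linarith
  have hK11 : 1 ≤ K1 := by rw [eK1]; linarith
  have hK10 : (0:ℝ) ≤ K1 := by linarith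
  have hM0 : (0:ℝ) ≤ M := by
    rw [eM]; exact mul_nonneg hL0 (by linarith)
  have hC0 : K1 ≤ C := by
    rw [eC]; have := mul_nonneg hL0 hM0; linarith
  have hCnn : (0:ℝ) ≤ C := le_trans hK10 hC0
  have hB0 : (0:ℝ) ≤ B := by
    rw [eB]; exact mul_nonneg hL0 (by linarith)
  have hC10 : K1 ≤ C1 := by
    rw [eC1]; have := mul_nonneg hL0 hB0; linarith
  have hC1nn : (0:ℝ) ≤ C1 := le_trans hK10 hC10
  have hG0 : (0:ℝ) ≤ G := by
    rw [eG]; exact mul_nonneg hL0 (by linarith)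
  have hG20 : (0:ℝ) ≤ G2 := by
    rw [eG2]; exact mul_nonneg hL0 (by linarith)
  -- existence of good parameters
  have good_t : ∀ s ∈ Icc (0:ℝ) S, ∃ t ∈ Icc (0:ℝ) T, dist (p s) (q t) ≤ K1 := by
    intro s hs
    have h := hclose.1 _ (mem_image_of_mem p hs)
    have hne : (q '' Icc 0 T).Nonempty := ⟨q 0, mem_image_of_mem q ⟨le_rfl, hT⟩⟩
    have hlt : Metric.infDist (p s) (q '' Icc 0 T) < K + 1 := lt_of_le_of_lt h (by linarith)
    obtain ⟨z, hz, hd⟩ := (Metric.infDist_lt_iff hne).1 hlt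
    obtain ⟨t, ht, rfl⟩ := hz
    exact ⟨t, ht, by rw [eK1]; exact hd.le⟩
  have good_s : ∀ t ∈ Icc (0:ℝ) T, ∃ s ∈ Icc (0:ℝ) S, dist (q t) (p s) ≤ K1 := by
    intro t ht
    have h := hclose.2 _ (mem_image_of_mem q ht)
    have hne : (p '' Icc 0 S).Nonempty := ⟨p 0, mem_image_of_mem p ⟨le_rfl, hS⟩⟩
    have hlt : Metric.infDist (q t) (p '' Icc 0 S) < K + 1 := lt_of_le_of_lt h (by linarith)
    obtain ⟨z, hz, hd⟩ := (Metric.infDist_lt_iff hne).1 hlt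
    obtain ⟨s, hs, rfl⟩ := hz
    exact ⟨s, hs, by rw [eK1]; exact hd.le⟩
  -- coarse monotonicity
  have mono : ∀ s ∈ Icc (0:ℝ) S, ∀ s' ∈ Icc (0:ℝ) S, s ≤ s' →
      ∀ t ∈ Icc (0:ℝ) T, ∀ t' ∈ Icc (0:ℝ) T,
      dist (p s) (q t) ≤ K1 → dist (p s') (q t') ≤ K1 → t - B ≤ t' := by
    intro s hs s' hs' hss' t ht t' ht' hgt hgt'
    rcases le_or_gt t t' with hcase | hcase
    · linarith
    have h0t' : (0:ℝ) ≤ t' := ht'.1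
    set m := ⌈t'⌉₊ + 1 with hm
    have hm0 : 0 < m := Nat.succ_pos _
    have hmR : (0:ℝ) < m := by exact_mod_cast hm0
    have ht'm : t' ≤ (m:ℝ) := by
      have h1 : t' ≤ (⌈t'⌉₊ : ℝ) := Nat.le_ceil t'
      have h2 : ((⌈t'⌉₊ : ℕ):ℝ) ≤ (m:ℝ) := by exact_mod_cast Nat.le_succ ⌈t'⌉₊
      linarith
    set v : ℕ → ℝ := fun j => ((min j m : ℕ):ℝ) * t' / (m:ℝ) with hv
    have hvle : ∀ j, v j ≤ t' := by
      intro j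
      have h1 : ((min j m : ℕ):ℝ) ≤ (m:ℝ) := by exact_mod_cast min_le_right j m
      have h2 : ((min j m : ℕ):ℝ) * t' ≤ (m:ℝ) * t' := mul_le_mul_of_nonneg_right h1 h0t'
      calc v j = ((min j m : ℕ):ℝ) * t' / (m:ℝ) := rfl
        _ ≤ (m:ℝ) * t' / (m:ℝ) := by gcongr
        _ = t' := by field_simp
    have hvmem : ∀ j, v j ∈ Icc (0:ℝ) T := by
      intro j
      refine ⟨?_, le_trans (hvle j) ht'.2⟩
      apply div_nonneg (mul_nonneg (by positivity) h0t') hmR.le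
    have hvstep : ∀ j : ℕ, |v (j+1) - v j| ≤ 1 := by
      intro j
      have hab1 : min j m ≤ min (j+1) m := by omega
      have hab2 : min (j+1) m ≤ min j m + 1 := by omega
      have hr1 : ((min j m : ℕ):ℝ) ≤ ((min (j+1) m : ℕ):ℝ) := by exact_mod_cast hab1
      have hr2 : ((min (j+1) m : ℕ):ℝ) ≤ ((min j m : ℕ):ℝ) + 1 := by exact_mod_cast hab2
      have he : v (j+1) - v j = (((min (j+1) m : ℕ):ℝ) - ((min j m : ℕ):ℝ)) * t' / (m:ℝ) := by
        rw [hv]; ring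
      rw [he, abs_of_nonneg (by apply div_nonneg (mul_nonneg (by linarith) h0t') hmR.le)]
      have h3 : (((min (j+1) m : ℕ):ℝ) - ((min j m : ℕ):ℝ)) * t' ≤ 1 * t' :=
        mul_le_mul_of_nonneg_right (by linarith) h0t'
      calc (((min (j+1) m : ℕ):ℝ) - ((min j m : ℕ):ℝ)) * t' / (m:ℝ) ≤ 1 * t' / (m:ℝ) := by
            gcongr
        _ = t' / m := by ring
        _ ≤ 1 := by rw [div_le_one hmR]; exact ht'm
    have hch : ∀ j : ℕ, ∃ x, x ∈ Icc (0:ℝ) S ∧ dist (q (v j)) (p x) ≤ K1 ∧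
        (j = 0 → x = 0) ∧ (m ≤ j → x = s') := by
      intro j
      rcases Nat.eq_zero_or_pos j with rfl | hj
      · refine ⟨0, ⟨le_rfl, hS⟩, ?_, fun _ => rfl, fun hmj => absurd hmj (by omega)⟩
        have hv0 : v 0 = 0 := by rw [hv]; simp
        rw [hv0, dist_comm]
        calc dist (p 0) (q 0) ≤ K := h00
          _ ≤ K1 := by rw [eK1]; linarith
      rcases le_or_gt m j with hmj | hjm
      · have hvj : v j = t' := by
          rw [hv]; simp only [min_eq_right hmj]
          field_simp
        refine ⟨s', hs', ?_, fun h0 => absurd h0 (by omega), fun _ => rfl⟩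
        rw [hvj, dist_comm]; exact hgt'
      · obtain ⟨x, hx, hdx⟩ := good_s (v j) (hvmem j)
        exact ⟨x, hx, hdx, fun h0 => absurd h0 (by omega), fun hmj => absurd hmj (by omega)⟩
    choose H Hmem Hdist H0 Hm using hch
    have Hstep : ∀ j : ℕ, |H (j+1) - H j| ≤ M := by
      intro j
      have hd1 : dist (q (v j)) (q (v (j+1))) ≤ L * 1 + eps := by
        have h1 := qg_up hlamL hqQ (hvmem j) (hvmem (j+1))
        have h2 : |v j - v (j+1)| ≤ 1 := by rw [abs_sub_comm]; exact hvstep j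
        have h4 : L * |v j - v (j+1)| ≤ L * 1 := mul_le_mul_of_nonneg_left h2 hL0
        linarith
      have hd2 : dist (p (H j)) (p (H (j+1))) ≤ 2 * K1 + L + eps := by
        have t4 := dist_triangle4 (p (H j)) (q (v j)) (q (v (j+1))) (p (H (j+1)))
        have e1 : dist (p (H j)) (q (v j)) ≤ K1 := by rw [dist_comm]; exact Hdist j
        have e2 : dist (q (v (j+1))) (p (H (j+1))) ≤ K1 := Hdist (j+1)
        linarith
      have h3 := qg_par hlam hlamL heps hpQ (Hmem j) (Hmem (j+1))
      rw [abs_sub_comm]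
      calc |H j - H (j+1)| ≤ L * (dist (p (H j)) (p (H (j+1))) + eps) := h3
        _ ≤ L * (2 * K1 + L + eps + eps) := mul_le_mul_of_nonneg_left (by linarith) hL0
        _ = M := by rw [eM]; ring
    have hH0 : H 0 = 0 := H0 0 rfl
    set A : Finset ℕ := (Finset.range (m+1)).filter (fun j => H j ≤ s) with hA
    have hAne : A.Nonempty :=
      ⟨0, Finset.mem_filter.2 ⟨Finset.mem_range.2 (Nat.succ_pos m), by rw [hH0]; exact hs.1⟩⟩
    set j0 := A.max' hAne with hj0
    have hj0A := Finset.mem_filter.1 (A.max'_mem hAne)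
    have hj0m : j0 ≤ m := by have := Finset.mem_range.1 hj0A.1; omega
    have hj0s : H j0 ≤ s := hj0A.2
    have hnear : |H j0 - s| ≤ M := by
      rcases eq_or_lt_of_le hj0m with he | hlt
      · have h1 : H j0 = s' := Hm j0 (le_of_eq he.symm)
        have h2 : H j0 = s := le_antisymm hj0s (h1 ▸ hss')
        rw [h2, sub_self, abs_zero]; exact hM0
      · have hnotA : j0 + 1 ∉ A := fun hmem => absurd (A.le_max' _ hmem) (by omega)
        have hgt1 : s < H (j0+1) := by
          by_contra hle
          push_neg at hle
          exact hnotA (Finset.mem_filter.2 ⟨Finset.mem_range.2 (by omega), hle⟩)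
        have hst := Hstep j0
        rw [abs_le] at hst ⊢
        constructor <;> linarith [hst.1, hst.2]
    have hdqs : dist (q (v j0)) (p s) ≤ C := by
      have h1 : dist (p (H j0)) (p s) ≤ L * |H j0 - s| + eps := qg_up hlamL hpQ (Hmem j0) hs
      calc dist (q (v j0)) (p s) ≤ dist (q (v j0)) (p (H j0)) + dist (p (H j0)) (p s) :=
            dist_triangle _ _ _
        _ ≤ K1 + (L * M + eps) := by
            have h7 := Hdist j0
            have h8 : L * |H j0 - s| ≤ L * M := mul_le_mul_of_nonneg_left hnear hL0
            linarith
        _ = C := by rw [eC]; ring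
    have hdqt : dist (q (v j0)) (q t) ≤ 2 * C := by
      have h1 : dist (p s) (q t) ≤ K1 := hgt
      calc dist (q (v j0)) (q t) ≤ dist (q (v j0)) (p s) + dist (p s) (q t) := dist_triangle _ _ _
        _ ≤ C + K1 := by linarith
        _ ≤ 2 * C := by linarith
    have h5 := qg_par hlam hlamL heps hqQ (hvmem j0) ht
    have h6 : |v j0 - t| ≤ B := by
      rw [eB]
      calc |v j0 - t| ≤ L * (dist (q (v j0)) (q t) + eps) := h5
        _ ≤ L * (2 * C + eps) := mul_le_mul_of_nonneg_left (by linarith) hL0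
    rw [abs_le] at h6
    linarith [hvle j0, h6.1]
  -- discretization of p
  obtain ⟨n, hn⟩ : ∃ n : ℕ, n = ⌈S⌉₊ + 1 := ⟨_, rfl⟩
  have hn0 : 0 < n := by omega
  have hnR : (0:ℝ) < n := by exact_mod_cast hn0
  obtain ⟨σ, hσ⟩ : ∃ x : ℝ, x = S / n := ⟨_, rfl⟩
  have hσ0 : 0 ≤ σ := by rw [hσ]; exact div_nonneg hS hnR.le
  have hσ1 : σ ≤ 1 := by
    rw [hσ, div_le_one hnR]
    have h1 : S ≤ (⌈S⌉₊ : ℝ) := Nat.le_ceil S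
    have h2 : ((⌈S⌉₊ : ℕ):ℝ) ≤ (n:ℝ) := by rw [hn]; push_cast; linarith
    linarith
  have hnσ : (n:ℝ) * σ = S := by rw [hσ]; field_simp
  have hsmem : ∀ j : ℕ, ((min j n : ℕ):ℝ) * σ ∈ Icc (0:ℝ) S := by
    intro j
    constructor
    · positivity
    · have h1 : ((min j n : ℕ):ℝ) ≤ (n:ℝ) := by exact_mod_cast min_le_right j n
      calc ((min j n : ℕ):ℝ) * σ ≤ (n:ℝ) * σ := mul_le_mul_of_nonneg_right h1 hσ0
        _ = S := hnσ
  have hch2 : ∀ j : ℕ, ∃ t, t ∈ Icc (0:ℝ) T ∧ dist (p (((min j n : ℕ):ℝ) * σ)) (q t) ≤ K1 ∧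
      (j = 0 → t = 0) := by
    intro j
    rcases Nat.eq_zero_or_pos j with rfl | hj
    · refine ⟨0, ⟨le_rfl, hT⟩, ?_, fun _ => rfl⟩
      have h1 : ((min 0 n : ℕ):ℝ) * σ = 0 := by simp
      rw [h1]
      calc dist (p 0) (q 0) ≤ K := h00
        _ ≤ K1 := by rw [eK1]; linarith
    · obtain ⟨t, ht, hdt⟩ := good_t _ (hsmem j)
      exact ⟨t, ht, hdt, fun h => absurd h (by omega)⟩
  choose tp tpmem tpdist tp0 using hch2
  -- running maximum
  obtain ⟨tm, htm⟩ : ∃ f : ℕ → ℝ,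
      f = fun i => (Finset.range (i+1)).sup' ⟨0, Finset.mem_range.2 (Nat.succ_pos i)⟩ tp :=
    ⟨_, rfl⟩
  have tm_ge : ∀ i j, j ≤ i → tp j ≤ tm i := by
    intro i j hj
    rw [htm]
    exact Finset.le_sup' tp (Finset.mem_range.2 (by omega))
  have tm_ex : ∀ i, ∃ j, j ≤ i ∧ tm i = tp j := by
    intro i
    obtain ⟨j, hj, he⟩ := Finset.exists_mem_eq_sup'
      (⟨0, Finset.mem_range.2 (Nat.succ_pos i)⟩ : (Finset.range (i+1)).Nonempty) tp
    refine ⟨j, ?_, ?_⟩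
    · have := Finset.mem_range.1 hj; omega
    · rw [htm]; exact he
  have tm_mem : ∀ i, tm i ∈ Icc (0:ℝ) T := by
    intro i
    obtain ⟨j, _, he⟩ := tm_ex i
    rw [he]; exact tpmem j
  have tm_mono : ∀ a b : ℕ, a ≤ b → tm a ≤ tm b := by
    intro a b hab
    obtain ⟨j, hj, he⟩ := tm_ex a
    rw [he]; exact tm_ge b j (le_trans hj hab)
  have tm0 : tm 0 = 0 := by
    obtain ⟨j, hj, he⟩ := tm_ex 0
    rw [he]
    exact tp0 j (by omega)
  have tm_close : ∀ i, dist (p (((min i n : ℕ):ℝ) * σ)) (q (tm i)) ≤ C1 := by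
    intro i
    obtain ⟨j, hj, he⟩ := tm_ex i
    have hsle : ((min j n : ℕ):ℝ) * σ ≤ ((min i n : ℕ):ℝ) * σ := by
      have h1 : ((min j n : ℕ):ℝ) ≤ ((min i n : ℕ):ℝ) := by
        exact_mod_cast (by omega : min j n ≤ min i n)
      exact mul_le_mul_of_nonneg_right h1 hσ0
    have h1 : tp j - B ≤ tp i :=
      mono _ (hsmem j) _ (hsmem i) hsle _ (tpmem j) _ (tpmem i) (tpdist j) (tpdist i)
    have h2 : tp i ≤ tm i := tm_ge i i le_rfl
    have h3 : |tm i - tp i| ≤ B := by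
      rw [abs_le]
      constructor
      · linarith
      · rw [he]; linarith
    have h4 : dist (q (tm i)) (q (tp i)) ≤ L * B + eps := by
      have h5 := qg_up hlamL hqQ (tm_mem i) (tpmem i)
      have h6 : L * |tm i - tp i| ≤ L * B := mul_le_mul_of_nonneg_left h3 hL0
      linarith
    calc dist (p (((min i n : ℕ):ℝ) * σ)) (q (tm i))
        ≤ dist (p (((min i n : ℕ):ℝ) * σ)) (q (tp i)) + dist (q (tp i)) (q (tm i)) :=
          dist_triangle _ (q (tp i)) _
      _ ≤ K1 + (L * B + eps) := by
          rw [dist_comm (q (tp i))]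
          exact add_le_add (tpdist i) h4
      _ = C1 := by rw [eC1]; ring
  have tm_gap : ∀ i, tm (i+1) ≤ tm i + G := by
    intro i
    obtain ⟨j, hj, he⟩ := tm_ex (i+1)
    rcases le_or_gt j i with hji | hji
    · have := tm_ge i j hji
      rw [he]; linarith
    · have hj1 : j = i + 1 := by omega
      have hstep : |((min i n : ℕ):ℝ) * σ - ((min (i+1) n : ℕ):ℝ) * σ| ≤ σ := by
        have h1 : min i n ≤ min (i+1) n := by omega
        have h2 : min (i+1) n ≤ min i n + 1 := by omega
        have hr1 : ((min i n : ℕ):ℝ) ≤ ((min (i+1) n : ℕ):ℝ) := by exact_mod_cast h1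
        have hr2 : ((min (i+1) n : ℕ):ℝ) ≤ ((min i n : ℕ):ℝ) + 1 := by exact_mod_cast h2
        rw [abs_le]
        constructor <;> nlinarith
      have hd : dist (q (tm i)) (q (tp (i+1))) ≤ C1 + (L * σ + eps) + K1 := by
        have t4 := dist_triangle4 (q (tm i)) (p (((min i n : ℕ):ℝ) * σ))
          (p (((min (i+1) n : ℕ):ℝ) * σ)) (q (tp (i+1)))
        have e1 : dist (q (tm i)) (p (((min i n : ℕ):ℝ) * σ)) ≤ C1 := by
          rw [dist_comm]; exact tm_close i
        have e2 : dist (p (((min i n : ℕ):ℝ) * σ)) (p (((min (i+1) n : ℕ):ℝ) * σ))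
            ≤ L * σ + eps := by
          have h5 := qg_up hlamL hpQ (hsmem i) (hsmem (i+1))
          have h6 : L * |((min i n : ℕ):ℝ) * σ - ((min (i+1) n : ℕ):ℝ) * σ| ≤ L * σ :=
            mul_le_mul_of_nonneg_left hstep hL0
          linarith
        have e3 := tpdist (i+1)
        linarith
      have h7 := qg_par hlam hlamL heps hqQ (tm_mem i) (tpmem (i+1))
      have h8 : |tm i - tp (i+1)| ≤ G := by
        calc |tm i - tp (i+1)| ≤ L * (dist (q (tm i)) (q (tp (i+1))) + eps) := h7
          _ ≤ L * (C1 + (L * σ + eps) + K1 + eps) := mul_le_mul_of_nonneg_left (by linarith) hL0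
          _ ≤ L * (C1 + K1 + L + 2 * eps) := by
              have h9 : L * σ ≤ L * 1 := mul_le_mul_of_nonneg_left hσ1 hL0
              exact mul_le_mul_of_nonneg_left (by linarith) hL0
          _ = G := eG.symm
      rw [abs_le] at h8
      rw [he, hj1]
      linarith [h8.1]
  -- endpoints
  have hSmem : S ∈ Icc (0:ℝ) S := ⟨hS, le_rfl⟩
  have hTmem : T ∈ Icc (0:ℝ) T := ⟨hT, le_rfl⟩
  have hsn : ((min n n : ℕ):ℝ) * σ = S := by rw [min_self]; exact hnσ
  have tm_close_n : dist (p S) (q (tm n)) ≤ C1 := by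
    have := tm_close n
    rwa [hsn] at this
  have hend : dist (p S) (q T) ≤ C1 := by
    obtain ⟨s0, hs0, hds0⟩ := good_s T hTmem
    obtain ⟨t1, ht1, hdt1⟩ := good_t S hSmem
    have h1 : T - B ≤ t1 :=
      mono s0 hs0 S hSmem hs0.2 T hTmem t1 ht1 (by rw [dist_comm]; exact hds0) hdt1
    have h2 : dist (q t1) (q T) ≤ L * B + eps := by
      have h3 := qg_up hlamL hqQ ht1 hTmem
      have h4 : |t1 - T| ≤ B := by
        rw [abs_le]; constructor <;> [linarith [ht1.2]; linarith [ht1.2]]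
      have h5 : L * |t1 - T| ≤ L * B := mul_le_mul_of_nonneg_left h4 hL0
      linarith
    calc dist (p S) (q T) ≤ dist (p S) (q t1) + dist (q t1) (q T) := dist_triangle _ _ _
      _ ≤ K1 + (L * B + eps) := add_le_add hdt1 h2
      _ = C1 := by rw [eC1]; ring
  have hend2 : T - tm n ≤ G2 := by
    have h1 : dist (q (tm n)) (q T) ≤ 2 * C1 := by
      calc dist (q (tm n)) (q T) ≤ dist (q (tm n)) (p S) + dist (p S) (q T) :=
            dist_triangle _ _ _
        _ ≤ C1 + C1 := add_le_add (by rw [dist_comm]; exact tm_close_n) hend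
        _ = 2 * C1 := by ring
    have h2 := qg_par hlam hlamL heps hqQ (tm_mem n) hTmem
    have h3 : |tm n - T| ≤ G2 := by
      calc |tm n - T| ≤ L * (dist (q (tm n)) (q T) + eps) := h2
        _ ≤ L * (2 * C1 + eps) := mul_le_mul_of_nonneg_left (by linarith) hL0
        _ = G2 := eG2.symm
    rw [abs_le] at h3
    linarith [h3.1]
  -- interpolation sequences
  obtain ⟨us, hus⟩ : ∃ f : ℕ → ℝ,
      f = fun j => if j ≤ n then (j:ℝ) * σ else S + ((j:ℝ) - ((n:ℝ)+1)) := ⟨_, rfl⟩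
  obtain ⟨ut, hut⟩ : ∃ f : ℕ → ℝ,
      f = fun j => if j ≤ n then tm j else T + ((j:ℝ) - ((n:ℝ)+1)) := ⟨_, rfl⟩
  have husle : ∀ j : ℕ, j ≤ n → us j = (j:ℝ) * σ := by
    intro j hj; rw [hus]; simp [hj]
  have husgt : ∀ j : ℕ, ¬ j ≤ n → us j = S + ((j:ℝ) - ((n:ℝ)+1)) := by
    intro j hj; rw [hus]; simp [hj]
  have hutle : ∀ j : ℕ, j ≤ n → ut j = tm j := by
    intro j hj; rw [hut]; simp [hj]
  have hutgt : ∀ j : ℕ, ¬ j ≤ n → ut j = T + ((j:ℝ) - ((n:ℝ)+1)) := by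
    intro j hj; rw [hut]; simp [hj]
  have husn1 : us (n+1) = S := by
    rw [husgt (n+1) (by omega)]; push_cast; ring
  have hutn1 : ut (n+1) = T := by
    rw [hutgt (n+1) (by omega)]; push_cast; ring
  have hus0 : us 0 = 0 := by rw [husle 0 (Nat.zero_le n)]; simp
  have hut0 : ut 0 = 0 := by rw [hutle 0 (Nat.zero_le n)]; exact tm0
  have husm : Monotone us := by
    apply monotone_nat_of_le_succ
    intro j
    rcases le_or_gt (j+1) n with hj1 | hj1
    · rw [husle j (by omega), husle (j+1) hj1]
      have : ((j:ℝ)) ≤ ((j+1:ℕ):ℝ) := by push_cast; linarith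
      exact mul_le_mul_of_nonneg_right this hσ0
    · rcases le_or_gt j n with hj | hj
      · have hjn : j = n := by omega
        rw [husle j hj, husgt (j+1) (by omega), hjn]
        push_cast
        rw [hnσ]
        linarith
      · rw [husgt j (by omega), husgt (j+1) (by omega)]
        push_cast; linarith
  have hutm : Monotone ut := by
    apply monotone_nat_of_le_succ
    intro j
    rcases le_or_gt (j+1) n with hj1 | hj1
    · rw [hutle j (by omega), hutle (j+1) hj1]
      exact tm_mono j (j+1) (by omega)
    · rcases le_or_gt j n with hj | hj
      · have hjn : j = n := by omega
        rw [hutle j hj, hutgt (j+1) (by omega), hjn]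
        push_cast
        linarith [(tm_mem n).2]
      · rw [hutgt j (by omega), hutgt (j+1) (by omega)]
        push_cast; linarith
  have huslow : ∀ j : ℕ, (j:ℝ) - ((n:ℝ)+1) ≤ us j := by
    intro j
    rcases le_or_gt j n with hj | hj
    · rw [husle j hj]
      have h1 : (j:ℝ) ≤ (n:ℝ) := by exact_mod_cast hj
      have h2 : 0 ≤ (j:ℝ) * σ := mul_nonneg (by positivity) hσ0
      linarith
    · rw [husgt j (by omega)]; linarith
  have hutlow : ∀ j : ℕ, (j:ℝ) - ((n:ℝ)+1) ≤ ut j := by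
    intro j
    rcases le_or_gt j n with hj | hj
    · rw [hutle j hj]
      have h1 : (j:ℝ) ≤ (n:ℝ) := by exact_mod_cast hj
      linarith [(tm_mem j).1]
    · rw [hutgt j (by omega)]; linarith
  -- segment bound
  have hseg : ∀ j : ℕ, ∀ x ∈ Icc (us j) (us (j+1)), ∀ y ∈ Icc (ut j) (ut (j+1)),
      dist (p x) (q y) ≤ L + eps + C1 + L * (G + G2) + eps := by
    have hLG : L * G ≤ L * (G + G2) := mul_le_mul_of_nonneg_left (by linarith) hL0
    have hLG2 : L * G2 ≤ L * (G + G2) := mul_le_mul_of_nonneg_left (by linarith) hL0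
    have hLGnn : 0 ≤ L * (G + G2) := mul_nonneg hL0 (by linarith)
    have hLσ : L * σ ≤ L * 1 := mul_le_mul_of_nonneg_left hσ1 hL0
    intro j x hx y hy
    rcases le_or_gt (j+1) n with hj1 | hj1
    · -- main case
      have hjn : j ≤ n := by omega
      rw [husle j hjn, husle (j+1) hj1] at hx
      rw [hutle j hjn, hutle (j+1) hj1] at hy
      have hcast : ((j+1:ℕ):ℝ) * σ = (j:ℝ) * σ + σ := by push_cast; ring
      have hxmem : x ∈ Icc (0:ℝ) S := by
        constructor
        · exact le_trans (mul_nonneg (by positivity) hσ0) hx.1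
        · have h1 : ((j+1:ℕ):ℝ) ≤ (n:ℝ) := by exact_mod_cast hj1
          have h2 : ((j+1:ℕ):ℝ) * σ ≤ (n:ℝ) * σ := mul_le_mul_of_nonneg_right h1 hσ0
          rw [hnσ] at h2
          exact le_trans hx.2 h2
      have hymem : y ∈ Icc (0:ℝ) T :=
        ⟨le_trans (tm_mem j).1 hy.1, le_trans hy.2 (tm_mem (j+1)).2⟩
      have hjσmem : ((j:ℝ) * σ) ∈ Icc (0:ℝ) S := by
        have := hsmem j
        rwa [min_eq_left hjn] at this
      have d1 : dist (p x) (p ((j:ℝ) * σ)) ≤ L * σ + eps := by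
        have h5 := qg_up hlamL hpQ hxmem hjσmem
        have h6 : |x - (j:ℝ) * σ| ≤ σ := by
          rw [abs_le]
          constructor
          · linarith [hx.1, hσ0]
          · rw [hcast] at hx
            linarith [hx.2]
        have h7 : L * |x - (j:ℝ) * σ| ≤ L * σ := mul_le_mul_of_nonneg_left h6 hL0
        linarith
      have dmid : dist (p ((j:ℝ) * σ)) (q (tm j)) ≤ C1 := by
        have := tm_close j
        rwa [min_eq_left hjn] at this
      have d2 : dist (q (tm j)) (q y) ≤ L * G + eps := by
        have h5 := qg_up hlamL hqQ (tm_mem j) hymem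
        have h6 : |tm j - y| ≤ G := by
          rw [abs_le]
          constructor
          · linarith [hy.2, tm_gap j]
          · linarith [hy.1, hG0]
        have h7 : L * |tm j - y| ≤ L * G := mul_le_mul_of_nonneg_left h6 hL0
        linarith
      have t4 := dist_triangle4 (p x) (p ((j:ℝ) * σ)) (q (tm j)) (q y)
      linarith
    · rcases le_or_gt j n with hj | hj
      · -- boundary case j = n
        have hjn : j = n := by omega
        subst hjn
        rw [husle j le_rfl, husn1] at hx
        rw [hnσ] at hx
        have hxS : x = S := le_antisymm hx.2 hx.1
        rw [hutle j le_rfl, hutn1] at hy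
        have hymem : y ∈ Icc (0:ℝ) T := ⟨le_trans (tm_mem j).1 hy.1, hy.2⟩
        have d2 : dist (q (tm j)) (q y) ≤ L * G2 + eps := by
          have h5 := qg_up hlamL hqQ (tm_mem j) hymem
          have h6 : |tm j - y| ≤ G2 := by
            rw [abs_le]
            constructor
            · linarith [hy.2, hend2]
            · linarith [hy.1, hG20]
          have h7 : L * |tm j - y| ≤ L * G2 := mul_le_mul_of_nonneg_left h6 hL0
          linarith
        have t3 := dist_triangle (p x) (q (tm j)) (q y)
        rw [hxS] at t3 ⊢
        linarith [tm_close_n]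
      · -- both beyond the end
        have h1 : S ≤ us j := by
          rw [husgt j (by omega)]
          have : ((n:ℝ)+1) ≤ (j:ℝ) := by exact_mod_cast hj
          linarith
        have h2 : T ≤ ut j := by
          rw [hutgt j (by omega)]
          have : ((n:ℝ)+1) ≤ (j:ℝ) := by exact_mod_cast hj
          linarith
        have hpx : p x = p S := hpP.2 x (le_trans h1 hx.1)
        have hqy : q y = q T := hqP.2 y (le_trans h2 hy.1)
        rw [hpx, hqy]
        linarith [hend, hLGnn]
  -- assemble
  refine ⟨pwl us, pwl ut,
    (pwl_monotone husm hus0).monotoneOn _,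
    ((pwl_monotone husm hus0).continuous_of_surjective
      (pwl_surjective husm hus0 huslow)).continuousOn,
    ?_,
    pwl_tendsto husm huslow,
    (pwl_monotone hutm hut0).monotoneOn _,
    ((pwl_monotone hutm hut0).continuous_of_surjective
      (pwl_surjective hutm hut0 hutlow)).continuousOn,
    ?_,
    pwl_tendsto hutm hutlow,
    ?_⟩
  · intro t ht
    rw [mem_Ici] at ht ⊢
    have h1 := (pwl_mem husm ht).1
    have h2 : us 0 ≤ us ⌊t⌋₊ := husm (Nat.zero_le _)
    rw [hus0] at h2
    linarith
  · intro t ht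
    rw [mem_Ici] at ht ⊢
    have h1 := (pwl_mem hutm ht).1
    have h2 : ut 0 ≤ ut ⌊t⌋₊ := hutm (Nat.zero_le _)
    rw [hut0] at h2
    linarith
  · intro t ht
    exact hseg ⌊t⌋₊ _ (pwl_mem husm ht) _ (pwl_mem hutm ht)


end AFT


/-- If `p, q` are `K`-close `(λ,ε)`-quasigeodesics in a `δ`-hyperbolic
geodesic metric space originating from points at distance at most `K`, then `p` and `q`
asynchronously `K'`-fellow travel, where `K' = K'(δ,λ,ε,K)` depends only on `δ,λ,ε,K`. -/
theorem async_fellow_travel_of_close_quasigeodesics :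
    ∃ K' : ℝ → ℝ → ℝ → ℝ → ℝ,
      ∀ (X : Type) [MetricSpace X], ∀ δ lam eps K : ℝ,
        0 ≤ δ → 0 < lam → 0 ≤ eps → 0 ≤ K →
        GeodesicSpace X → SlimTriangles X δ →
        ∀ (p q : ℝ → X) (S T : ℝ), 0 ≤ S → 0 ≤ T →
          IsPathOn p S → IsPathOn q T →
          IsQGOn lam eps p (Set.Icc 0 S) → IsQGOn lam eps q (Set.Icc 0 T) →
          KClose K (p '' Set.Icc 0 S) (q '' Set.Icc 0 T) →
          dist (p 0) (q 0) ≤ K →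
          AsyncFellowTravel (K' δ lam eps K) p q := by
  refine ⟨fun _ lam eps K => AFT.aKC lam eps K, ?_⟩
  intro X _ δ lam eps K _ hlam heps hK _ _ p q S T hS hT hpP hqP hpQ hqQ hclose h00
  exact AFT.main hlam heps hK hS hT hpP hqP hpQ hqQ hclose h00
end

section
/- Let H be a δ-hyperbolic geodesic metric space and let p, q be two (λ,ε)-quasigeodesic paths in H joining points P₁,P₂ and Q₁,Q₂, respectively. Suppose H₀ ≥ 0 is such that dist(P₁,Q₁) ≤ H₀ and dist(P₂,Q₂) ≤ H₀. Then there exists K = K(δ,λ,ε,H₀) ≥ 0, depending only on δ, λ, ε and H₀, such that p and q asynchronously K-fellow travel. -/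
open Filter Set

/-!
Both quasigeodesics stay uniformly close to a geodesic joining their endpoints (the Morse lemma),
and geodesics with close endpoints are close because quadrilaterals are `2δ`-thin; so every point
of `q` is close to some point of `p`.

For the Morse lemma, let `γ s₀` be the point of the geodesic farthest from `p`, at distance `D`.
The piece of `p` between points near `γ (s₀ ∓ 2D)` has length `O(D)`. A thin quadrilateral puts
`γ s₀` within `2δ` of a geodesic joining the ends of that piece (the short geodesics closing the
quadrilateral stay `D - 1` away from `γ s₀`), and bisecting the piece `k ≈ log₂ D` times puts that
geodesic within `δ k + O(1)` of `p`. Hence `D = O(δ log D)`, so `D` is bounded.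

`p` keeps its parametrization; at time `t` the reparametrized `q` sits at the last parameter where
`q` is close to `p [0, t]`. This parameter moves by a bounded amount when `t` moves by `1`, and
interpolating it linearly between integer times makes it continuous.
-/

open Metric

lemma image_comp_const_sub_Icc {α : Type*} (g : ℝ → α) (L : ℝ) :
    (fun s => g (L - s)) '' Icc 0 L = g '' Icc 0 L := by
  rw [show (fun s => g (L - s)) = g ∘ (fun s => L - s) from rfl, image_comp,
    image_const_sub_Icc, sub_self, sub_zero]

section Geodesic

variable {X : Type*} [MetricSpace X] {g : ℝ → X} {x y : X}

lemma GeodFromTo.dist_eq (hg : GeodFromTo g x y) {s t : ℝ}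
    (hs : s ∈ Icc 0 (dist x y)) (ht : t ∈ Icc 0 (dist x y)) : dist (g s) (g t) = |s - t| :=
  hg.2.2 s hs t ht

lemma GeodFromTo.dist_left (hg : GeodFromTo g x y) {t : ℝ} (ht : t ∈ Icc 0 (dist x y)) :
    dist x (g t) = t := by
  rw [← hg.1, hg.dist_eq ⟨le_rfl, dist_nonneg⟩ ht, zero_sub, abs_neg, abs_of_nonneg ht.1]

lemma GeodFromTo.dist_right (hg : GeodFromTo g x y) {t : ℝ} (ht : t ∈ Icc 0 (dist x y)) :
    dist (g t) y = dist x y - t := by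
  conv_lhs => rw [← hg.2.1]
  rw [hg.dist_eq ht ⟨dist_nonneg, le_rfl⟩, abs_of_nonpos (by linarith [ht.2]), neg_sub]

lemma GeodFromTo.dist_add_dist_of_mem (hg : GeodFromTo g x y) {z : X}
    (hz : z ∈ g '' Icc 0 (dist x y)) : dist x z + dist z y = dist x y := by
  obtain ⟨t, ht, rfl⟩ := hz
  rw [hg.dist_left ht, hg.dist_right ht]
  ring

lemma GeodFromTo.continuousOn (hg : GeodFromTo g x y) : ContinuousOn g (Icc 0 (dist x y)) := by
  refine LipschitzOnWith.continuousOn (K := 1) fun s hs t ht => ?_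
  rw [edist_dist, edist_dist, hg.dist_eq hs ht, ENNReal.coe_one, one_mul, Real.dist_eq]

lemma GeodFromTo.isCompact_image (hg : GeodFromTo g x y) : IsCompact (g '' Icc 0 (dist x y)) :=
  isCompact_Icc.image_of_continuousOn hg.continuousOn

lemma GeodFromTo.reverse (hg : GeodFromTo g x y) :
    GeodFromTo (fun s => g (dist x y - s)) y x := by
  have hmem : ∀ s ∈ Icc 0 (dist y x), dist x y - s ∈ Icc 0 (dist x y) := fun s hs => by
    rw [dist_comm] at hs; exact ⟨by linarith [hs.2], by linarith [hs.1]⟩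
  refine ⟨by simpa using hg.2.1, by simpa [dist_comm] using hg.1, fun s hs t ht => ?_⟩
  rw [hg.dist_eq (hmem s hs) (hmem t ht), abs_sub_comm]
  ring_nf

lemma GeodFromTo.restrict (hg : GeodFromTo g x y) {a b : ℝ}
    (ha : a ∈ Icc 0 (dist x y)) (hb : b ∈ Icc 0 (dist x y)) (hab : a ≤ b) :
    GeodFromTo (fun s => g (a + s)) (g a) (g b) := by
  have hd : dist (g a) (g b) = b - a := by
    rw [hg.dist_eq ha hb, abs_sub_comm, abs_of_nonneg (by linarith)]
  have hmem : ∀ s ∈ Icc 0 (dist (g a) (g b)), a + s ∈ Icc 0 (dist x y) := fun s hs => by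
    rw [hd] at hs; exact ⟨by linarith [hs.1, ha.1], by linarith [hs.2, hb.2]⟩
  refine ⟨by simp, by simp [hd], fun s hs t ht => ?_⟩
  rw [hg.dist_eq (hmem s hs) (hmem t ht)]
  ring_nf

end Geodesic

namespace SlimTriangles

variable {X : Type*} [MetricSpace X] {δ : ℝ}

lemma exists_dist_le (hSl : SlimTriangles X δ) {p q r : ℝ → X} {x y z : X}
    (hp : GeodFromTo p x y) (hq : GeodFromTo q z y) (hr : GeodFromTo r x z)
    {t : ℝ} (ht : t ∈ Icc 0 (dist x y)) :
    ∃ w ∈ q '' Icc 0 (dist z y) ∪ r '' Icc 0 (dist x z), dist (p t) w ≤ δ := by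
  have h := hSl x y z p _ r hp hq.reverse hr t ht
  rw [dist_comm y z, image_comp_const_sub_Icc] at h
  obtain ⟨w, hw, hdist⟩ := (hq.isCompact_image.union hr.isCompact_image).exists_infDist_eq_dist
    ⟨z, Or.inl ⟨0, ⟨le_rfl, dist_nonneg⟩, hq.1⟩⟩ (p t)
  exact ⟨w, hw, hdist ▸ h⟩

lemma exists_dist_le_of_quadrilateral (hG : GeodesicSpace X) (hSl : SlimTriangles X δ)
    {γ g₁ g₂ g₃ : ℝ → X} {x y u v : X} (hγ : GeodFromTo γ x y)
    (h₁ : GeodFromTo g₁ x u) (h₂ : GeodFromTo g₂ u v) (h₃ : GeodFromTo g₃ v y)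
    {t : ℝ} (ht : t ∈ Icc 0 (dist x y)) :
    ∃ w ∈ g₁ '' Icc 0 (dist x u) ∪ g₂ '' Icc 0 (dist u v) ∪ g₃ '' Icc 0 (dist v y),
      dist (γ t) w ≤ 2 * δ := by
  obtain ⟨d, hd⟩ := hG u y
  obtain ⟨w, hw | hw, hw_dist⟩ := hSl.exists_dist_le hγ hd h₁ ht
  · obtain ⟨s, hs, rfl⟩ := hw
    obtain ⟨w', hw' | hw', hw'_dist⟩ := hSl.exists_dist_le hd h₃ h₂ hs
    · exact ⟨w', Or.inr hw', (dist_triangle _ _ _).trans (by linarith)⟩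
    · exact ⟨w', Or.inl (Or.inr hw'), (dist_triangle _ _ _).trans (by linarith)⟩
  · exact ⟨w, Or.inl (Or.inl hw), by linarith [dist_nonneg.trans hw_dist]⟩

lemma exists_dist_le_of_coarsePath (hG : GeodesicSpace X) (hSl : SlimTriangles X δ)
    {gap : ℝ} {f : ℝ → X} (k : ℕ) {lo hi : ℝ} (hlen : |hi - lo| ≤ 2 ^ k)
    (hf : ∀ a ∈ uIcc lo hi, ∀ b ∈ uIcc lo hi, |a - b| ≤ 1 → dist (f a) (f b) ≤ gap)
    {g : ℝ → X} (hg : GeodFromTo g (f lo) (f hi)) {s : ℝ} (hs : s ∈ Icc 0 (dist (f lo) (f hi))) :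
    ∃ a ∈ uIcc lo hi, dist (g s) (f a) ≤ δ * k + gap := by
  induction k generalizing lo hi g s with
  | zero =>
    refine ⟨lo, left_mem_uIcc, ?_⟩
    have hstep := hf lo left_mem_uIcc hi right_mem_uIcc (by rw [abs_sub_comm]; simpa using hlen)
    rw [dist_comm, hg.dist_left hs, Nat.cast_zero, mul_zero, zero_add]
    exact hs.2.trans hstep
  | succ k ih =>
    set mid := (lo + hi) / 2 with hmid_def
    have hmid : mid ∈ uIcc lo hi := by
      rcases le_total lo hi with h | h
      · rw [uIcc_of_le h]; constructor <;> linarith [hmid_def]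
      · rw [uIcc_of_ge h]; constructor <;> linarith [hmid_def]
    have hhalf : |mid - lo| ≤ 2 ^ k ∧ |hi - mid| ≤ 2 ^ k := by
      have e1 : mid - lo = (hi - lo) / 2 := by ring
      have e2 : hi - mid = (hi - lo) / 2 := by ring
      rw [e1, e2, abs_div, abs_two, pow_succ] at *
      constructor <;> linarith
    have hhalves : ∀ {lo' hi' : ℝ} {g' : ℝ → X}, uIcc lo' hi' ⊆ uIcc lo hi →
        |hi' - lo'| ≤ 2 ^ k → GeodFromTo g' (f lo') (f hi') →
        ∀ w ∈ g' '' Icc 0 (dist (f lo') (f hi')), dist (g s) w ≤ δ →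
        ∃ a ∈ uIcc lo hi, dist (g s) (f a) ≤ δ * ↑(k + 1) + gap := by
      rintro lo' hi' g' hsub hlen' hg' _ ⟨t, ht, rfl⟩ hw
      obtain ⟨a, ha, hda⟩ := ih hlen' (fun a ha b hb => hf a (hsub ha) b (hsub hb)) hg' ht
      exact ⟨a, hsub ha, by push_cast; linarith [dist_triangle (g s) (g' t) (f a)]⟩
    obtain ⟨r, hr⟩ := hG (f lo) (f mid)
    obtain ⟨q, hq⟩ := hG (f mid) (f hi)
    obtain ⟨w, hw | hw, hw_dist⟩ := hSl.exists_dist_le hg hq hr hs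
    · exact hhalves (uIcc_subset_uIcc hmid right_mem_uIcc) hhalf.2 hq w hw hw_dist
    · exact hhalves (uIcc_subset_uIcc left_mem_uIcc hmid) hhalf.1 hr w hw hw_dist

end SlimTriangles

section Quasigeodesic

variable {X : Type*} [MetricSpace X] {lam eps S : ℝ} {p : ℝ → X}

lemma IsQGOn.dist_le (hp : IsQGOn lam eps p (Icc 0 S)) {a b : ℝ}
    (ha : a ∈ Icc 0 S) (hb : b ∈ Icc 0 S) : dist (p a) (p b) ≤ lam * |a - b| + eps :=
  (hp a ha b hb).2

lemma IsQGOn.dist_le_of_abs_sub_le (hlam : 0 ≤ lam) (hp : IsQGOn lam eps p (Icc 0 S)) {a b r : ℝ}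
    (ha : a ∈ Icc 0 S) (hb : b ∈ Icc 0 S) (hab : |a - b| ≤ r) :
    dist (p a) (p b) ≤ lam * r + eps :=
  (hp.dist_le ha hb).trans (by gcongr)

lemma IsQGOn.abs_sub_le (hlam : 0 < lam) (hp : IsQGOn lam eps p (Icc 0 S)) {a b : ℝ}
    (ha : a ∈ Icc 0 S) (hb : b ∈ Icc 0 S) : |a - b| ≤ lam * (dist (p a) (p b) + eps) := by
  have h := (hp a ha b hb).1
  rw [div_sub' hlam.ne', div_le_iff₀ hlam] at h
  linarith

end Quasigeodesic

lemma sq_le_two_mul_two_pow (k : ℕ) : k ^ 2 ≤ 2 * 2 ^ k := by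
  induction k with
  | zero => norm_num
  | succ k ih =>
    have := Nat.lt_two_pow_self (n := k)
    calc (k + 1) ^ 2 = k ^ 2 + 2 * k + 1 := by ring
      _ ≤ 2 * 2 ^ k + 2 * 2 ^ k := by linarith
      _ = 2 * 2 ^ (k + 1) := by ring

lemma natCast_le_of_two_pow_le {α β : ℝ} (hα : 0 ≤ α) (hβ : 0 ≤ β) {k : ℕ}
    (h : (2 : ℝ) ^ k ≤ α + β * k) : (k : ℝ) ≤ 2 * (α + β) := by
  rcases Nat.eq_zero_or_pos k with rfl | hk
  · simp only [Nat.cast_zero]; positivity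
  have hk1 : (1 : ℝ) ≤ k := by exact_mod_cast hk
  have hsq : (k : ℝ) ^ 2 ≤ 2 * 2 ^ k := by exact_mod_cast sq_le_two_mul_two_pow k
  nlinarith

/-- `C₀ + 2δ(α + β)` with `C₀ = 2δ + 1 + λ + ε`, `α = 2 + 2λ(6C₀ + 2 + ε)`, `β = 12λδ`: if
`D ≤ C₀ + δ k` and `2 ^ k ≤ α + β k`, then `k ≤ 2(α + β)`. -/
noncomputable def morseBound (δ lam eps : ℝ) : ℝ :=
  (2 * δ + 1 + lam + eps) +
    δ * (2 * ((2 + 2 * lam * (6 * (2 * δ + 1 + lam + eps) + 2 + eps)) + 12 * lam * δ))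

lemma morseBound_nonneg {δ lam eps : ℝ} (hδ : 0 ≤ δ) (hlam : 0 ≤ lam) (heps : 0 ≤ eps) :
    0 ≤ morseBound δ lam eps := by
  unfold morseBound; positivity

lemma le_morseBound {δ lam eps D : ℝ} {k : ℕ} (hδ : 0 ≤ δ) (hlam : 0 ≤ lam) (heps : 0 ≤ eps)
    (hDk : D ≤ 2 * δ + 1 + (lam + eps) + δ * k)
    (hk : (2 : ℝ) ^ k ≤ 2 * (lam * (6 * D + 2 + eps)) + 2) :
    D ≤ morseBound δ lam eps := by
  have hk' : (2 : ℝ) ^ k ≤ (2 + 2 * lam * (6 * (2 * δ + 1 + lam + eps) + 2 + eps))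
      + 12 * lam * δ * k := by
    have : lam * (6 * D + 2 + eps) ≤ lam * (6 * (2 * δ + 1 + lam + eps + δ * k) + 2 + eps) := by
      gcongr; linarith
    linarith
  have hkbound := natCast_le_of_two_pow_le (by positivity) (by positivity) hk'
  calc D ≤ 2 * δ + 1 + lam + eps + δ * k := by linarith
    _ ≤ morseBound δ lam eps := by unfold morseBound; gcongr

section Morse

variable {X : Type*} [MetricSpace X] {δ : ℝ}

lemma GeodFromTo.exists_far_connector {γ : ℝ → X} {x y : X} (hγ : GeodFromTo γ x y)
    {E : Set X} (hx : x ∈ E) {D s₀ : ℝ} (hs₀ : s₀ ∈ Icc 0 (dist x y))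
    (hmax : ∀ s ∈ Icc 0 (dist x y), infDist (γ s) E ≤ D) (hD : ∀ e ∈ E, D ≤ dist (γ s₀) e) :
    ∃ s ∈ Icc 0 s₀, s₀ - s ≤ 2 * D ∧ ∃ e ∈ E, dist (γ s) e ≤ D + 1 ∧
      ∀ z, dist (γ s) z ≤ dist (γ s) e → D - 1 ≤ dist (γ s₀) z := by
  have hD0 : 0 ≤ D := infDist_nonneg.trans (hmax s₀ hs₀)
  by_cases hclose : s₀ ≤ 2 * D
  · refine ⟨0, ⟨le_rfl, hs₀.1⟩, by linarith, x, hx, by rw [hγ.1, dist_self]; linarith,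
      fun z hz => ?_⟩
    rw [hγ.1, dist_self, dist_le_zero] at hz
    subst hz
    linarith [hD x hx]
  · have hs : s₀ - 2 * D ∈ Icc 0 (dist x y) := ⟨by linarith, by linarith [hs₀.2]⟩
    obtain ⟨e, he, hde⟩ := (infDist_lt_iff ⟨x, hx⟩).mp
      ((hmax _ hs).trans_lt (lt_add_one D))
    refine ⟨s₀ - 2 * D, ⟨hs.1, by linarith⟩, by linarith, e, he, hde.le, fun z hz => ?_⟩
    have h2D : dist (γ s₀) (γ (s₀ - 2 * D)) = 2 * D := by
      rw [hγ.dist_eq hs₀ hs, sub_sub_cancel, abs_of_nonneg (by linarith)]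
    linarith [dist_triangle (γ s₀) z (γ (s₀ - 2 * D)), dist_comm z (γ (s₀ - 2 * D))]

lemma SlimTriangles.exists_le_of_far_connectors (hG : GeodesicSpace X)
    (hSl : SlimTriangles X δ) {p : ℝ → X} {gap a b : ℝ}
    (hp : ∀ u ∈ uIcc a b, ∀ v ∈ uIcc a b, |u - v| ≤ 1 → dist (p u) (p v) ≤ gap)
    {ν : ℝ → X} {w₁ w₂ : X} (hν : GeodFromTo ν w₁ w₂) {t D : ℝ} (ht : t ∈ Icc 0 (dist w₁ w₂))
    (hD : ∀ u ∈ uIcc a b, D ≤ dist (ν t) (p u))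
    (h₁ : ∀ z, dist w₁ z ≤ dist w₁ (p a) → D - 1 ≤ dist (ν t) z)
    (h₂ : ∀ z, dist w₂ z ≤ dist w₂ (p b) → D - 1 ≤ dist (ν t) z) :
    ∃ k : ℕ, D ≤ 2 * δ + 1 + gap + δ * k ∧ (2 : ℝ) ^ k ≤ 2 * |b - a| + 2 := by
  obtain ⟨n, hn, hn'⟩ := exists_nat_pow_near (le_add_of_nonneg_left (abs_nonneg (b - a)))
    one_lt_two
  have hgap : 0 ≤ gap := by
    simpa using hp a left_mem_uIcc a left_mem_uIcc (by simp)
  refine ⟨n + 1, ?_, by rw [pow_succ]; linarith⟩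
  obtain ⟨g₁, hg₁⟩ := hG w₁ (p a)
  obtain ⟨g₂, hg₂⟩ := hG (p a) (p b)
  obtain ⟨g₃, hg₃⟩ := hG (p b) w₂
  obtain ⟨w, hw, hdw⟩ := hSl.exists_dist_le_of_quadrilateral hG hν hg₁ hg₂ hg₃ ht
  have hδ : 0 ≤ δ := by linarith [dist_nonneg.trans hdw]
  have hδk : 0 ≤ δ * ↑(n + 1) := by positivity
  rcases hw with (hw | hw) | hw
  · have := h₁ w (by linarith [hg₁.dist_add_dist_of_mem hw, dist_nonneg (x := w) (y := p a)])
    linarith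
  · obtain ⟨s, hs, rfl⟩ := hw
    obtain ⟨u, hu, hdu⟩ := hSl.exists_dist_le_of_coarsePath hG (n + 1) (by linarith) hp hg₂ hs
    linarith [hD u hu, dist_triangle (ν t) (g₂ s) (p u)]
  · have := h₂ w (by
      rw [dist_comm w₂, dist_comm w₂]
      linarith [hg₃.dist_add_dist_of_mem hw, dist_nonneg (x := p b) (y := w)])
    linarith

variable {lam eps S : ℝ} {p γ : ℝ → X}

theorem IsQGOn.infDist_geodesic_le_morseBound (hG : GeodesicSpace X) (hSl : SlimTriangles X δ)
    (hδ : 0 ≤ δ) (hlam : 0 < lam) (heps : 0 ≤ eps) (hS : 0 ≤ S)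
    (hp : IsQGOn lam eps p (Icc 0 S)) (hγ : GeodFromTo γ (p 0) (p S)) :
    ∀ s ∈ Icc 0 (dist (p 0) (p S)), infDist (γ s) (p '' Icc 0 S) ≤ morseBound δ lam eps := by
  set E := p '' Icc 0 S
  obtain ⟨s₀, hs₀, hmax⟩ := isCompact_Icc.exists_isMaxOn ⟨0, le_rfl, dist_nonneg⟩
    ((continuous_infDist_pt E).comp_continuousOn hγ.continuousOn)
  set D := infDist (γ s₀) E
  replace hmax : ∀ s ∈ Icc 0 (dist (p 0) (p S)), infDist (γ s) E ≤ D := fun s hs => hmax hs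
  suffices hDR : D ≤ morseBound δ lam eps from fun s hs => (hmax s hs).trans hDR
  have hD : ∀ e ∈ E, D ≤ dist (γ s₀) e := fun e he => infDist_le_dist_of_mem he
  -- `γ su` and `γ sw` lie within `2D` of `γ s₀` on either side, and short geodesics from them
  -- to `p a`, `p b` stay `D - 1` away from `γ s₀`
  obtain ⟨su, hsu, hsuD, _, ⟨a, ha, rfl⟩, hda, h₁⟩ :=
    hγ.exists_far_connector (mem_image_of_mem p (left_mem_Icc.2 hS)) hs₀ hmax hD
  have hs₀' : dist (p 0) (p S) - s₀ ∈ Icc 0 (dist (p S) (p 0)) := by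
    rw [dist_comm]; exact ⟨by linarith [hs₀.2], by linarith [hs₀.1]⟩
  obtain ⟨s', hs', hs'D, _, ⟨b, hb, rfl⟩, hdb, h₂⟩ :=
    hγ.reverse.exists_far_connector (mem_image_of_mem p (right_mem_Icc.2 hS)) hs₀'
      (fun s hs => hmax _ ⟨by rw [dist_comm] at hs; linarith [hs.2], by linarith [hs.1]⟩)
      (by simpa only [sub_sub_cancel] using hD)
  rw [sub_sub_cancel] at h₂
  set sw := dist (p 0) (p S) - s'
  have hsw : sw ∈ Icc 0 (dist (p 0) (p S)) := ⟨by linarith [hs'.2, hs₀.1], by linarith [hs'.1]⟩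
  have hsu' : su ∈ Icc 0 (dist (p 0) (p S)) := ⟨hsu.1, hsu.2.trans hs₀.2⟩
  have hdist : dist (γ su) (γ sw) = sw - su := by
    rw [hγ.dist_eq hsu' hsw, abs_of_nonpos (by linarith [hsu.2, hs'.2]), neg_sub]
  have ht : s₀ - su ∈ Icc 0 (dist (γ su) (γ sw)) := by
    rw [hdist]; exact ⟨by linarith [hsu.2], by linarith [hs'.2]⟩
  have hab : uIcc a b ⊆ Icc 0 S := uIcc_subset_Icc ha hb
  obtain ⟨k, hDk, hk⟩ := hSl.exists_le_of_far_connectors hG (gap := lam + eps)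
    (fun u hu v hv huv => by
      have := hp.dist_le_of_abs_sub_le hlam.le (hab hu) (hab hv) huv; linarith)
    (hγ.restrict hsu' hsw (by linarith [hsu.2, hs'.2])) ht
    (fun u hu => by simpa using hD _ (mem_image_of_mem p (hab hu)))
    (by simpa using h₁) (by simpa using h₂)
  have hdab : dist (p a) (p b) ≤ 6 * D + 2 := by
    linarith [dist_triangle4 (p a) (γ su) (γ sw) (p b), dist_comm (p a) (γ su)]
  have hba : |b - a| ≤ lam * (6 * D + 2 + eps) := by
    rw [abs_sub_comm]
    exact (hp.abs_sub_le hlam ha hb).trans (by gcongr)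
  exact le_morseBound hδ hlam.le heps hDk (hk.trans (by linarith))

end Morse

noncomputable def lastCloseParam {X : Type*} [MetricSpace X] (p f : ℝ → X) (L R t : ℝ) : ℝ :=
  sSup {s ∈ Icc 0 L | ∃ a ∈ Icc 0 t, dist (p a) (f s) ≤ R}

noncomputable def crossingBound (lam eps C E R : ℝ) : ℝ :=
  lam * (lam * (2 * R + 2 * C + E + eps)) + eps + R + (C + E)

lemma le_crossingBound {lam eps C E R : ℝ} (hlam : 0 ≤ lam) (heps : 0 ≤ eps) (hC : 0 ≤ C)
    (hE : 0 ≤ E) (hR : 0 ≤ R) : R ≤ crossingBound lam eps C E R := by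
  have : 0 ≤ lam * (lam * (2 * R + 2 * C + E + eps)) := by positivity
  unfold crossingBound; linarith

section LastCloseParam

variable {X : Type*} [MetricSpace X] {p f : ℝ → X} {L R t : ℝ}

lemma le_lastCloseParam {s a : ℝ} (hs : s ∈ Icc 0 L) (ha : a ∈ Icc 0 t)
    (hd : dist (p a) (f s) ≤ R) : s ≤ lastCloseParam p f L R t :=
  le_csSup ⟨L, fun _ hs => hs.1.2⟩ ⟨hs, a, ha, hd⟩

variable (hL : 0 ≤ L) (h0 : dist (p 0) (f 0) ≤ R)
include hL h0

lemma lastCloseParam_mem (ht : 0 ≤ t) : lastCloseParam p f L R t ∈ Icc 0 L :=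
  ⟨le_lastCloseParam ⟨le_rfl, hL⟩ ⟨le_rfl, ht⟩ h0,
    csSup_le ⟨0, ⟨le_rfl, hL⟩, 0, ⟨le_rfl, ht⟩, h0⟩ fun _ hs => hs.1.2⟩

lemma lastCloseParam_mono {t' : ℝ} (ht : 0 ≤ t) (htt' : t ≤ t') :
    lastCloseParam p f L R t ≤ lastCloseParam p f L R t' :=
  csSup_le ⟨0, ⟨le_rfl, hL⟩, 0, ⟨le_rfl, ht⟩, h0⟩ fun _ ⟨hs, _, ha, hd⟩ =>
    le_lastCloseParam hs ⟨ha.1, ha.2.trans htt'⟩ hd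

lemma lastCloseParam_eq {S : ℝ} (hS : 0 ≤ S) (hSL : dist (p S) (f L) ≤ R) :
    lastCloseParam p f L R S = L :=
  le_antisymm (lastCloseParam_mem hL h0 hS).2 (le_lastCloseParam ⟨hL, le_rfl⟩ ⟨hS, le_rfl⟩ hSL)

theorem IsQGOn.dist_lastCloseParam_le {lam eps S C E : ℝ} (hlam : 0 < lam)
    (hp : IsQGOn lam eps p (Icc 0 S)) (hC : 0 ≤ C)
    (hf : ∀ u ∈ Icc 0 L, ∀ v ∈ Icc 0 L, dist (f u) (f v) ≤ C * |u - v| + E)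
    (hSL : dist (p S) (f L) ≤ R) (hcover : ∀ s ∈ Icc 0 L, ∃ a ∈ Icc 0 S, dist (p a) (f s) ≤ R)
    (ht : t ∈ Icc 0 S) :
    dist (p t) (f (lastCloseParam p f L R t)) ≤ crossingBound lam eps C E R := by
  set σ := lastCloseParam p f L R t
  have hσ : σ ∈ Icc 0 L := lastCloseParam_mem hL h0 ht.1
  obtain ⟨s₁, ⟨hs₁, a, ha, hda⟩, hs₁σ⟩ :=
    exists_lt_of_lt_csSup (s := {s ∈ Icc 0 L | ∃ a ∈ Icc 0 t, dist (p a) (f s) ≤ R})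
      ⟨0, ⟨le_rfl, hL⟩, 0, ⟨le_rfl, ht.1⟩, h0⟩ (sub_one_lt σ)
  have hs₁σ' : s₁ ≤ σ := le_lastCloseParam hs₁ ha hda
  -- just beyond `σ`, the curve `f` is close to `p` only at parameters `b ≥ t`
  obtain ⟨s₂, hs₂, hσs₂, hs₂σ, b, hb, hdb⟩ : ∃ s₂ ∈ Icc 0 L, σ ≤ s₂ ∧ s₂ ≤ σ + 1 ∧
      ∃ b ∈ Icc t S, dist (p b) (f s₂) ≤ R := by
    rcases hσ.2.eq_or_lt with hσL | hσL
    · exact ⟨L, ⟨hL, le_rfl⟩, hσL.le, by linarith, S, ⟨ht.2, le_rfl⟩, hSL⟩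
    have hs₂ : min (σ + 1) L ∈ Icc 0 L := ⟨le_min (by linarith [hσ.1]) hL, min_le_right _ _⟩
    have hσs₂ : σ < min (σ + 1) L := lt_min (lt_add_one σ) hσL
    obtain ⟨b, hb, hdb⟩ := hcover _ hs₂
    refine ⟨_, hs₂, hσs₂.le, min_le_left _ _, b, ⟨?_, hb.2⟩, hdb⟩
    by_contra! hbt
    exact hσs₂.not_ge (le_lastCloseParam hs₂ ⟨hb.1, hbt.le⟩ hdb)
  have haS : a ∈ Icc 0 S := ⟨ha.1, ha.2.trans ht.2⟩
  have hbS : b ∈ Icc 0 S := ⟨ht.1.trans hb.1, hb.2⟩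
  have hf₁₂ : dist (f s₁) (f s₂) ≤ C * 2 + E :=
    (hf _ hs₁ _ hs₂).trans (by gcongr; rw [abs_le]; constructor <;> linarith)
  have hab : |a - b| ≤ lam * (2 * R + 2 * C + E + eps) :=
    (hp.abs_sub_le hlam haS hbS).trans (by
      gcongr; linarith [dist_triangle4 (p a) (f s₁) (f s₂) (p b), dist_comm (f s₂) (p b)])
  have hta : dist (p t) (p a) ≤ lam * (lam * (2 * R + 2 * C + E + eps)) + eps :=
    hp.dist_le_of_abs_sub_le hlam.le ht haS (by
      rw [abs_le] at hab ⊢; constructor <;> linarith [ha.2, hb.1])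
  have hf₁σ : dist (f s₁) (f σ) ≤ C * 1 + E :=
    (hf _ hs₁ _ hσ).trans (by gcongr; rw [abs_le]; constructor <;> linarith)
  unfold crossingBound
  linarith [dist_triangle4 (p t) (p a) (f s₁) (f σ)]

end LastCloseParam

section

variable {X : Type*} [MetricSpace X] {δ lam eps S : ℝ} {p γ : ℝ → X}

theorem IsQGOn.exists_dist_geodesic_le (hG : GeodesicSpace X) (hSl : SlimTriangles X δ)
    (hδ : 0 ≤ δ) (hlam : 0 < lam) (heps : 0 ≤ eps) (hS : 0 ≤ S)
    (hp : IsQGOn lam eps p (Icc 0 S)) (hγ : GeodFromTo γ (p 0) (p S)) :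
    ∀ t ∈ Icc 0 S, ∃ s ∈ Icc 0 (dist (p 0) (p S)),
      dist (p t) (γ s) ≤ crossingBound lam eps 1 0 (morseBound δ lam eps + 1) := by
  have hmorse := hp.infDist_geodesic_le_morseBound hG hSl hδ hlam heps hS hγ
  have hR := morseBound_nonneg hδ hlam.le heps
  have h0 : dist (p 0) (γ 0) ≤ morseBound δ lam eps + 1 := by
    rw [hγ.1, dist_self]; linarith
  intro t ht
  refine ⟨_, lastCloseParam_mem dist_nonneg h0 ht.1, hp.dist_lastCloseParam_le dist_nonneg h0
    hlam zero_le_one (fun u hu v hv => by simp [hγ.dist_eq hu hv]) ?_ (fun s hs => ?_) ht⟩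
  · rw [hγ.2.1, dist_self]; linarith
  · obtain ⟨_, ⟨a, ha, rfl⟩, hda⟩ :=
      (infDist_lt_iff ⟨p 0, mem_image_of_mem p (left_mem_Icc.2 hS)⟩).mp
        ((hmorse s hs).trans_lt (lt_add_one _))
    exact ⟨a, ha, by rw [dist_comm]; exact hda.le⟩

end

noncomputable def nbhdBound (δ lam eps H₀ : ℝ) : ℝ :=
  (morseBound δ lam eps + 1) + (2 * δ + H₀) + crossingBound lam eps 1 0 (morseBound δ lam eps + 1)

lemma le_nbhdBound {δ lam eps H₀ : ℝ} (hδ : 0 ≤ δ) (hlam : 0 ≤ lam) (heps : 0 ≤ eps) :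
    H₀ ≤ nbhdBound δ lam eps H₀ := by
  have := morseBound_nonneg hδ hlam heps
  have := le_crossingBound hlam heps zero_le_one le_rfl (by linarith : 0 ≤ morseBound δ lam eps + 1)
  unfold nbhdBound
  linarith

section CloseEndpoints

variable {X : Type*} [MetricSpace X] {δ : ℝ}

theorem SlimTriangles.exists_dist_le_of_geodesics (hG : GeodesicSpace X)
    (hSl : SlimTriangles X δ) {γ γ' : ℝ → X} {P₁ P₂ Q₁ Q₂ : X}
    (hγ : GeodFromTo γ P₁ P₂) (hγ' : GeodFromTo γ' Q₁ Q₂) {H₀ : ℝ}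
    (h₁ : dist P₁ Q₁ ≤ H₀) (h₂ : dist P₂ Q₂ ≤ H₀) :
    ∀ s ∈ Icc 0 (dist P₁ P₂), ∃ s' ∈ Icc 0 (dist Q₁ Q₂), dist (γ s) (γ' s') ≤ 2 * δ + H₀ := by
  intro s hs
  obtain ⟨g₁, hg₁⟩ := hG P₁ Q₁
  obtain ⟨g₃, hg₃⟩ := hG Q₂ P₂
  obtain ⟨w, (hw | hw) | hw, hdw⟩ := hSl.exists_dist_le_of_quadrilateral hG hγ hg₁ hγ' hg₃ hs
  · refine ⟨0, ⟨le_rfl, dist_nonneg⟩, ?_⟩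
    rw [hγ'.1]
    linarith [hg₁.dist_add_dist_of_mem hw, dist_triangle (γ s) w Q₁, dist_nonneg (x := P₁) (y := w)]
  · obtain ⟨s', hs', rfl⟩ := hw
    exact ⟨s', hs', by linarith [dist_nonneg.trans h₁]⟩
  · refine ⟨dist Q₁ Q₂, ⟨dist_nonneg, le_rfl⟩, ?_⟩
    rw [hγ'.2.1]
    linarith [hg₃.dist_add_dist_of_mem hw, dist_triangle (γ s) w Q₂, dist_nonneg (x := w) (y := P₂),
      dist_comm P₂ Q₂, dist_comm w Q₂]

variable {lam eps S T H₀ : ℝ} {p q : ℝ → X}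

theorem IsQGOn.exists_dist_le_of_dist_endpoints_le (hG : GeodesicSpace X)
    (hSl : SlimTriangles X δ) (hδ : 0 ≤ δ) (hlam : 0 < lam) (heps : 0 ≤ eps)
    (hS : 0 ≤ S) (hT : 0 ≤ T) (hp : IsQGOn lam eps p (Icc 0 S)) (hq : IsQGOn lam eps q (Icc 0 T))
    (h₀ : dist (p 0) (q 0) ≤ H₀) (h₁ : dist (p S) (q T) ≤ H₀) :
    ∀ v ∈ Icc 0 T, ∃ t ∈ Icc 0 S, dist (p t) (q v) ≤ nbhdBound δ lam eps H₀ := by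
  intro v hv
  obtain ⟨γp, hγp⟩ := hG (p 0) (p S)
  obtain ⟨γq, hγq⟩ := hG (q 0) (q T)
  obtain ⟨s, hs, hds⟩ := hq.exists_dist_geodesic_le hG hSl hδ hlam heps hT hγq v hv
  obtain ⟨s', hs', hds'⟩ := hSl.exists_dist_le_of_geodesics hG hγq hγp
    ((dist_comm _ _).trans_le h₀) ((dist_comm _ _).trans_le h₁) s hs
  obtain ⟨_, ⟨t, ht, rfl⟩, hdt⟩ :=
    (infDist_lt_iff ⟨p 0, mem_image_of_mem p (left_mem_Icc.2 hS)⟩).mp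
      ((hp.infDist_geodesic_le_morseBound hG hSl hδ hlam heps hS hγp s' hs').trans_lt
        (lt_add_one _))
  refine ⟨t, ht, ?_⟩
  unfold nbhdBound
  linarith [dist_triangle4 (p t) (γp s') (γq s) (q v), dist_comm (p t) (γp s'),
    dist_comm (γp s') (γq s), dist_comm (γq s) (q v)]

end CloseEndpoints

/-- The continuous function that interpolates `x` linearly between consecutive naturals up to
`n`, and continues with slope `1` after `n`. -/
noncomputable def piecewiseLinear (x : ℕ → ℝ) (n : ℕ) (t : ℝ) : ℝ :=
  x 0 + ∑ k ∈ Finset.range n, (x (k + 1) - x k) * projIcc 0 1 zero_le_one (t - k) + max (t - n) 0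

namespace piecewiseLinear

variable {x : ℕ → ℝ} {n : ℕ}

lemma continuous (x : ℕ → ℝ) (n : ℕ) : Continuous (piecewiseLinear x n) := by
  unfold piecewiseLinear
  fun_prop

lemma monotone (hx : Monotone x) : Monotone (piecewiseLinear x n) := fun t t' htt' => by
  unfold piecewiseLinear
  gcongr with k
  · exact sub_nonneg.2 (hx k.le_succ)
  · exact Subtype.mono_coe _ (monotone_projIcc _ (sub_le_sub_right htt' _))

lemma apply_natCast {j : ℕ} (hj : j ≤ n) : piecewiseLinear x n j = x j := by
  have hlow : ∀ k ∈ Finset.range j, (x (k + 1) - x k) * projIcc 0 1 zero_le_one ((j : ℝ) - k)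
      = x (k + 1) - x k := fun k hk => by
    have : (k : ℝ) + 1 ≤ j := by exact_mod_cast Finset.mem_range.1 hk
    rw [projIcc_of_right_le _ (by linarith), mul_one]
  have hhigh : ∀ k ∈ Finset.Ico j n, (x (k + 1) - x k) * projIcc 0 1 zero_le_one ((j : ℝ) - k)
      = 0 := fun k hk => by
    have : (j : ℝ) ≤ k := by exact_mod_cast (Finset.mem_Ico.1 hk).1
    rw [projIcc_of_le_left _ (by linarith), mul_zero]
  have hjn : (j : ℝ) ≤ n := by exact_mod_cast hj
  rw [piecewiseLinear, ← Finset.sum_range_add_sum_Ico _ hj, Finset.sum_congr rfl hlow,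
    Finset.sum_congr rfl hhigh, Finset.sum_range_sub, Finset.sum_const_zero,
    max_eq_right (by linarith)]
  ring

lemma tendsto_atTop (hx : Monotone x) : Tendsto (piecewiseLinear x n) atTop atTop := by
  refine tendsto_atTop_mono (fun t => ?_) (tendsto_atTop_add_const_left _ (x 0 - n) tendsto_id)
  have : 0 ≤ ∑ k ∈ Finset.range n, (x (k + 1) - x k) * projIcc 0 1 zero_le_one (t - k) :=
    Finset.sum_nonneg fun k _ => mul_nonneg (sub_nonneg.2 (hx k.le_succ)) (projIcc _ _ _ _).2.1
  unfold piecewiseLinear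
  linarith [le_max_left (t - n) 0, show id t = t from rfl]

lemma mem_Icc_of_mem_Icc (hx : Monotone x) {j : ℕ} (hj : j < n) {t : ℝ}
    (ht : t ∈ Icc (j : ℝ) (j + 1)) : piecewiseLinear x n t ∈ Icc (x j) (x (j + 1)) := by
  rw [← apply_natCast (x := x) hj.le, ← apply_natCast (x := x) (Nat.succ_le_of_lt hj)]
  exact ⟨monotone hx ht.1, monotone hx (by push_cast; exact ht.2)⟩

end piecewiseLinear

lemma IsPathOn.apply_eq_min {X : Type*} [MetricSpace X] {p : ℝ → X} {S t : ℝ}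
    (hp : IsPathOn p S) : p t = p (min t S) := by
  rcases le_total t S with h | h
  · rw [min_eq_left h]
  · rw [min_eq_right h, hp.2 t h]

theorem asyncFellowTravel_of_grid {X : Type*} [MetricSpace X] {p q : ℝ → X} {K : ℝ}
    {x : ℕ → ℝ} (hx : Monotone x) (hx0 : 0 ≤ x 0) (n : ℕ)
    (hstep : ∀ j < n, ∀ τ ∈ Icc (j : ℝ) (j + 1), ∀ v ∈ Icc (x j) (x (j + 1)), dist (p τ) (q v) ≤ K)
    (htail : ∀ τ ≥ (n : ℝ), ∀ v ≥ x n, dist (p τ) (q v) ≤ K) :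
    AsyncFellowTravel K p q := by
  have h0 : piecewiseLinear x n 0 = x 0 := by exact_mod_cast piecewiseLinear.apply_natCast n.zero_le
  refine ⟨id, piecewiseLinear x n, monotoneOn_id, continuousOn_id, mapsTo_id _, tendsto_id,
    (piecewiseLinear.monotone hx).monotoneOn _, (piecewiseLinear.continuous x n).continuousOn,
    fun t ht => ?_, piecewiseLinear.tendsto_atTop hx, fun τ hτ => ?_⟩
  · have := piecewiseLinear.monotone (n := n) hx (mem_Ici.1 ht)
    rw [h0] at this
    exact hx0.trans this
  rcases le_or_gt (n : ℝ) τ with hnτ | hτn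
  · refine htail τ hnτ _ ?_
    rw [← piecewiseLinear.apply_natCast (x := x) le_rfl]
    exact piecewiseLinear.monotone hx hnτ
  · have hj : ⌊τ⌋₊ < n := (Nat.floor_lt hτ).2 hτn
    exact hstep _ hj τ ⟨Nat.floor_le hτ, (Nat.lt_floor_add_one τ).le⟩ _
      (piecewiseLinear.mem_Icc_of_mem_Icc hx hj ⟨Nat.floor_le hτ, (Nat.lt_floor_add_one τ).le⟩)

lemma AsyncFellowTravel.mono {X : Type*} [MetricSpace X] {K K' : ℝ} {p q : ℝ → X}
    (h : AsyncFellowTravel K p q) (hK : K ≤ K') : AsyncFellowTravel K' p q :=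
  let ⟨φ, ψ, h₁, h₂, h₃, h₄, h₅, h₆, h₇, h₈, hdist⟩ := h
  ⟨φ, ψ, h₁, h₂, h₃, h₄, h₅, h₆, h₇, h₈, fun t ht => (hdist t ht).trans hK⟩

noncomputable def fellowBound (lam eps K : ℝ) : ℝ :=
  (lam + eps) + crossingBound lam eps lam eps K +
    (lam * (lam * (2 * crossingBound lam eps lam eps K + lam + 2 * eps)) + eps)

lemma le_fellowBound {lam eps K : ℝ} (hlam : 0 ≤ lam) (heps : 0 ≤ eps) (hK : 0 ≤ K) :
    K ≤ fellowBound lam eps K := by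
  have hK₂ := le_crossingBound hlam heps hlam heps hK
  have : 0 ≤ lam * (lam * (2 * crossingBound lam eps lam eps K + lam + 2 * eps)) := by
    have := hK.trans hK₂; positivity
  unfold fellowBound; linarith

section FellowTravel

variable {X : Type*} [MetricSpace X] {lam eps S T K : ℝ} {p q : ℝ → X}
  (hlam : 0 < lam) (hT : 0 ≤ T) (hp : IsQGOn lam eps p (Icc 0 S)) (hq : IsQGOn lam eps q (Icc 0 T))
  (hcover : ∀ v ∈ Icc 0 T, ∃ t ∈ Icc 0 S, dist (p t) (q v) ≤ K)
  (h₀ : dist (p 0) (q 0) ≤ K) (h₁ : dist (p S) (q T) ≤ K)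
include hlam hT hp hq hcover h₀ h₁

lemma dist_lastCloseParam_le_crossingBound {t : ℝ} (ht : t ∈ Icc 0 S) :
    dist (p t) (q (lastCloseParam p q T K t)) ≤ crossingBound lam eps lam eps K :=
  hp.dist_lastCloseParam_le hT h₀ hlam hlam.le (fun _ hu _ hv => hq.dist_le hu hv) h₁ hcover ht

lemma lastCloseParam_sub_le {t t' : ℝ} (ht : t ∈ Icc 0 S) (ht' : t' ∈ Icc 0 S) (htt' : t ≤ t')
    (ht't : t' ≤ t + 1) :
    lastCloseParam p q T K t' - lastCloseParam p q T K t ≤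
      lam * (2 * crossingBound lam eps lam eps K + lam + 2 * eps) := by
  set σ := lastCloseParam p q T K
  have hpp : dist (p t') (p t) ≤ lam * 1 + eps :=
    hp.dist_le_of_abs_sub_le hlam.le ht' ht (by rw [abs_le]; constructor <;> linarith)
  have hqq : dist (q (σ t')) (q (σ t)) ≤ 2 * crossingBound lam eps lam eps K + lam + eps := by
    linarith [dist_triangle4 (q (σ t')) (p t') (p t) (q (σ t)), dist_comm (q (σ t')) (p t'),
      dist_lastCloseParam_le_crossingBound hlam hT hp hq hcover h₀ h₁ ht,
      dist_lastCloseParam_le_crossingBound hlam hT hp hq hcover h₀ h₁ ht']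
  have := hq.abs_sub_le hlam (lastCloseParam_mem hT h₀ ht'.1) (lastCloseParam_mem hT h₀ ht.1)
  linarith [le_abs_self (σ t' - σ t), mul_le_mul_of_nonneg_left hqq hlam.le]

lemma dist_le_fellowBound {t t' u v : ℝ} (ht : t ∈ Icc 0 S) (ht' : t' ∈ Icc 0 S)
    (ht't : t' ≤ t + 1) (hu : u ∈ Icc t t')
    (hv : v ∈ Icc (lastCloseParam p q T K t) (lastCloseParam p q T K t')) :
    dist (p u) (q v) ≤ fellowBound lam eps K := by
  set σ := lastCloseParam p q T K
  have hσ := lastCloseParam_mem hT h₀ ht.1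
  have hpu : dist (p u) (p t) ≤ lam * 1 + eps :=
    hp.dist_le_of_abs_sub_le hlam.le ⟨ht.1.trans hu.1, hu.2.trans ht'.2⟩ ht
      (by rw [abs_le]; constructor <;> linarith [hu.1, hu.2])
  have hqv : dist (q (σ t)) (q v) ≤
      lam * (lam * (2 * crossingBound lam eps lam eps K + lam + 2 * eps)) + eps := by
    refine hq.dist_le_of_abs_sub_le hlam.le hσ
      ⟨hσ.1.trans hv.1, hv.2.trans (lastCloseParam_mem hT h₀ ht'.1).2⟩ ?_
    have := lastCloseParam_sub_le hlam hT hp hq hcover h₀ h₁ ht ht' (hu.1.trans hu.2) ht't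
    rw [abs_le]; constructor <;> linarith [hv.1, hv.2]
  unfold fellowBound
  linarith [dist_triangle4 (p u) (p t) (q (σ t)) (q v),
    dist_lastCloseParam_le_crossingBound hlam hT hp hq hcover h₀ h₁ ht]

theorem IsQGOn.asyncFellowTravel (heps : 0 ≤ eps) (hS : 0 ≤ S) (hp' : IsPathOn p S)
    (hq' : IsPathOn q T) : AsyncFellowTravel (fellowBound lam eps K) p q := by
  set σ := lastCloseParam p q T K
  have hmin : ∀ t : ℝ, 0 ≤ t → min t S ∈ Icc 0 S := fun t ht => ⟨le_min ht hS, min_le_right _ _⟩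
  refine asyncFellowTravel_of_grid (x := fun k => σ (min k S))
    (fun k l hkl => lastCloseParam_mono hT h₀ (le_min k.cast_nonneg hS)
      (min_le_min_right S (Nat.cast_le.2 hkl)))
    (lastCloseParam_mem hT h₀ (hmin _ (Nat.cast_nonneg 0)).1).1 ⌈S⌉₊ ?_ ?_
  · intro j _ τ hτ v hv
    rw [hp'.apply_eq_min]
    refine dist_le_fellowBound hlam hT hp hq hcover h₀ h₁ (hmin j j.cast_nonneg)
      (hmin _ (Nat.cast_nonneg _)) ?_ ⟨min_le_min_right S hτ.1,
        min_le_min_right S (by push_cast; exact hτ.2)⟩ hv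
    push_cast
    rw [← min_add_add_right]
    exact min_le_min_left _ (by linarith)
  · intro τ hτ v hv
    have hσS : σ (min ⌈S⌉₊ S) = T := by
      rw [min_eq_right (Nat.le_ceil S)]; exact lastCloseParam_eq hT h₀ hS h₁
    rw [hp'.2 τ ((Nat.le_ceil S).trans hτ), hq'.2 v (hσS ▸ hv)]
    exact h₁.trans (le_fellowBound hlam.le heps (dist_nonneg.trans h₀))

end FellowTravel

/-- In a `δ`-hyperbolic geodesic metric space, two
`(λ,ε)`-quasigeodesics `p` from `P₁` to `P₂` and `q` from `Q₁` to `Q₂` with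
`dist P₁ Q₁ ≤ H₀` and `dist P₂ Q₂ ≤ H₀` asynchronously `K`-fellow travel, where
`K = K(δ,λ,ε,H₀) ≥ 0` depends only on `δ, λ, ε, H₀`. -/
theorem async_fellow_travel_of_quasigeodesics_with_close_endpoints :
    ∃ K : ℝ → ℝ → ℝ → ℝ → ℝ,
      (∀ δ lam eps H₀ : ℝ, 0 ≤ K δ lam eps H₀) ∧
      ∀ (X : Type) [MetricSpace X], ∀ δ lam eps H₀ : ℝ,
        0 ≤ δ → 0 < lam → 0 ≤ eps → 0 ≤ H₀ →
        GeodesicSpace X → SlimTriangles X δ →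
        ∀ (p q : ℝ → X) (P₁ P₂ Q₁ Q₂ : X) (S T : ℝ), 0 ≤ S → 0 ≤ T →
          p 0 = P₁ → p S = P₂ → IsQGOn lam eps p (Set.Icc 0 S) → IsPathOn p S →
          q 0 = Q₁ → q T = Q₂ → IsQGOn lam eps q (Set.Icc 0 T) → IsPathOn q T →
          dist P₁ Q₁ ≤ H₀ → dist P₂ Q₂ ≤ H₀ →
          AsyncFellowTravel (K δ lam eps H₀) p q := by
  refine ⟨fun δ lam eps H₀ => max 0 (fellowBound lam eps (nbhdBound δ lam eps H₀)),
    fun _ _ _ _ => le_max_left _ _, ?_⟩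
  rintro X _ δ lam eps H₀ hδ hlam heps - hG hSl p q _ _ _ _ S T hS hT rfl rfl hp hp' rfl rfl hq hq'
    h₀ h₁
  have hK := le_nbhdBound (H₀ := H₀) hδ hlam.le heps
  have hcover := hp.exists_dist_le_of_dist_endpoints_le hG hSl hδ hlam heps hS hT hq h₀ h₁
  exact (hp.asyncFellowTravel hlam hT hq hcover (h₀.trans hK) (h₁.trans hK) heps hS hp' hq').mono
    (le_max_right _ _)
end

section
/- A non-trivial word w in a free group F is proper (i.e., there exist groups G and H with w[G] ≠ {1} and w[H] ≠ H) if and only if e(w) ≠ 1. -/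
/-- The exponent sum of the variable `i` in the word `w`. -/
noncomputable def expSum (w : FreeGroup ℕ) (i : ℕ) : ℤ :=
  Multiplicative.toAdd
    ((FreeGroup.lift fun j => Multiplicative.ofAdd (if j = i then (1 : ℤ) else 0)) w)

/-- `e(w)`: the gcd of the exponent sums of the variables of `w`, defined as the
nonnegative generator of the subgroup of `ℤ` generated by all exponent sums. -/
noncomputable def eExp (w : FreeGroup ℕ) : ℕ :=
  sInf {n : ℕ | AddSubgroup.closure (Set.range (expSum w)) = AddSubgroup.zmultiples ((n : ℤ))}

/-- The verbal set `w[G]`: the set of values of the word `w` in `G`. -/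
def wordValues (w : FreeGroup ℕ) (G : Type*) [Group G] : Set G :=
  Set.range fun f : ℕ → G => (FreeGroup.lift f) w

/-- `w[G] ≠ {1}`: the word `w` has a non-trivial value in `G`. -/
def valuesNontrivial (w : FreeGroup ℕ) (G : Type) [Group G] : Prop :=
  wordValues w G ≠ {1}

/-- `w[G] ≠ G`: not every element of `G` is a value of `w`. -/
def valuesNotFull (w : FreeGroup ℕ) (G : Type) [Group G] : Prop :=
  wordValues w G ≠ Set.univ

/-- abelianization-style map -/
noncomputable def Tmap : FreeGroup ℕ →* Multiplicative (ℕ →₀ ℤ) :=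
  FreeGroup.lift fun i => Multiplicative.ofAdd (Finsupp.single i 1)

lemma expSum_eq (w : FreeGroup ℕ) (i : ℕ) :
    expSum w i = Multiplicative.toAdd (Tmap w) i := by
  have h : (AddMonoidHom.toMultiplicative (Finsupp.applyAddHom (M := ℤ) i)).comp Tmap
      = FreeGroup.lift fun j => Multiplicative.ofAdd (if j = i then (1 : ℤ) else 0) := by
    apply FreeGroup.ext_hom
    intro a
    simp [Tmap, Finsupp.single_apply]
  have := congrArg (fun φ => Multiplicative.toAdd (φ w)) h
  simpa [expSum] using this.symm

lemma pairing_eq (w : FreeGroup ℕ) (c : ℕ → ℤ) :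
    Multiplicative.toAdd ((FreeGroup.lift fun i => Multiplicative.ofAdd (c i)) w)
      = (Multiplicative.toAdd (Tmap w)).sum (fun i a => c i * a) := by
  have h : (AddMonoidHom.toMultiplicative
        (Finsupp.linearCombination ℤ c).toAddMonoidHom).comp Tmap
      = FreeGroup.lift fun i => Multiplicative.ofAdd (c i) := by
    apply FreeGroup.ext_hom
    intro a
    simp [Tmap, Finsupp.linearCombination_single]
  have := congrArg (fun φ => Multiplicative.toAdd (φ w)) h
  simpa [Finsupp.linearCombination_apply, Finsupp.sum, smul_eq_mul] using this.symm

lemma lift_pow_eq {H : Type} [Group H] (g : H) (c : ℕ → ℤ) (w : FreeGroup ℕ) :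
    (FreeGroup.lift fun i => g ^ (c i)) w
      = g ^ (Multiplicative.toAdd ((FreeGroup.lift fun i => Multiplicative.ofAdd (c i)) w)) := by
  have h : (zpowersHom H g).comp (FreeGroup.lift fun i => Multiplicative.ofAdd (c i))
      = FreeGroup.lift fun i => g ^ (c i) := by
    apply FreeGroup.ext_hom
    intro a
    simp
  have := congrArg (fun φ => φ w) h
  simpa using this.symm

lemma zmult_inj {m n : ℕ} (h : AddSubgroup.zmultiples ((m : ℤ)) = AddSubgroup.zmultiples ((n : ℤ))) :
    m = n := by
  have h1 : (n : ℤ) ∣ (m : ℤ) := by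
    rw [← Int.mem_zmultiples_iff, ← h, Int.mem_zmultiples_iff]
  have h2 : (m : ℤ) ∣ (n : ℤ) := by
    rw [← Int.mem_zmultiples_iff, h, Int.mem_zmultiples_iff]
  exact_mod_cast Int.dvd_antisymm (by positivity) (by positivity) h2 h1

lemma eExp_spec (w : FreeGroup ℕ) :
    AddSubgroup.closure (Set.range (expSum w)) = AddSubgroup.zmultiples ((eExp w : ℤ)) := by
  obtain ⟨a, ha⟩ := Int.subgroup_cyclic (AddSubgroup.closure (Set.range (expSum w)))
  have key : AddSubgroup.closure (Set.range (expSum w))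
      = AddSubgroup.zmultiples ((a.natAbs : ℤ)) := by
    rw [ha, ← AddSubgroup.zmultiples_eq_closure]
    ext x
    simp [Int.mem_zmultiples_iff, Int.natAbs_dvd]
  have hset : {n : ℕ | AddSubgroup.closure (Set.range (expSum w))
      = AddSubgroup.zmultiples ((n : ℤ))} = {a.natAbs} := by
    ext n
    constructor
    · intro hn
      exact (zmult_inj (key.symm.trans hn)).symm
    · rintro rfl; exact key
  rw [eExp, hset, csInf_singleton]
  exact key

lemma eExp_one_iff (w : FreeGroup ℕ) :
    eExp w = 1 ↔ AddSubgroup.closure (Set.range (expSum w)) = ⊤ := by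
  constructor
  · intro h
    rw [eExp_spec, h]
    ext x; simp [Int.mem_zmultiples_iff]
  · intro h
    have : AddSubgroup.zmultiples ((eExp w : ℤ)) = AddSubgroup.zmultiples ((1 : ℕ) : ℤ) := by
      rw [← eExp_spec, h]
      ext x; simp [Int.mem_zmultiples_iff]
    exact zmult_inj this


/-- A non-trivial word `w` of the free group is proper (there exist
groups `G` and `H` with `w[G] ≠ 1` and `w[H] ≠ H`) if and only if `e(w) ≠ 1`. -/
theorem proper_iff_eExp_ne_one (w : FreeGroup ℕ) (hw : w ≠ 1) :
    ((∃ (G : Type) (instG : Group G), @valuesNontrivial w G instG) ∧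
     (∃ (H : Type) (instH : Group H), @valuesNotFull w H instH)) ↔ eExp w ≠ 1 := by
  set S := AddSubgroup.closure (Set.range (expSum w)) with hS
  set t := Multiplicative.toAdd (Tmap w) with ht
  have hrange : ∀ i, t i ∈ S := fun i => by
    rw [← expSum_eq]
    exact AddSubgroup.subset_closure (Set.mem_range_self i)
  constructor
  · rintro ⟨-, H, instH, hH⟩ heq
    -- eExp w = 1 → every group is covered, contradiction with hH
    apply hH
    ext g
    simp only [Set.mem_univ, iff_true]
    -- 1 ∈ S
    have hStop : S = ⊤ := (eExp_one_iff w).mp heq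
    -- S is contained in the range of the pairing map
    have hone : (1 : ℤ) ∈ S := by rw [hStop]; trivial
    -- build the pairing hom
    let M : (ℕ → ℤ) →+ ℤ :=
      { toFun := fun c => t.sum fun i a => c i * a
        map_zero' := by simp
        map_add' := fun c d => by
          simp only [Pi.add_apply, add_mul]
          exact Finsupp.sum_add }
    have hSM : S ≤ M.range := by
      rw [hS]
      apply (AddSubgroup.closure_le _).mpr
      rintro x ⟨j, rfl⟩
      refine ⟨fun i => if i = j then 1 else 0, ?_⟩
      show t.sum (fun i a => (if i = j then 1 else 0) * a) = expSum w j
      rw [expSum_eq, ← ht]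
      simp only [ite_mul, one_mul, zero_mul]
      rw [Finsupp.sum_ite_eq' t j (fun _ a => a)]
      split_ifs with hj
      · rfl
      · exact (Finsupp.notMem_support_iff.mp hj).symm
    obtain ⟨c, hc⟩ := hSM hone
    refine ⟨fun i => g ^ (c i), ?_⟩
    show (FreeGroup.lift fun i => g ^ (c i)) w = g
    rw [lift_pow_eq, pairing_eq, ← ht]
    rw [show t.sum (fun i a => c i * a) = (1 : ℤ) from hc]
    simp
  · intro hne
    refine ⟨⟨FreeGroup ℕ, inferInstance, ?_⟩, ⟨Multiplicative ℤ, inferInstance, ?_⟩⟩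
    · -- w ∈ wordValues w (FreeGroup ℕ)
      intro habs
      apply hw
      have hmem : w ∈ wordValues w (FreeGroup ℕ) := by
        refine ⟨FreeGroup.of, ?_⟩
        have : FreeGroup.lift (FreeGroup.of (α := ℕ)) = MonoidHom.id _ :=
          FreeGroup.ext_hom _ _ (fun a => by simp)
        simp [this]
      rw [habs] at hmem
      exact hmem
    · -- w[Multiplicative ℤ] ⊆ ofAdd '' S ≠ univ
      have hSne : S ≠ ⊤ := fun h => hne ((eExp_one_iff w).mpr h)
      obtain ⟨z, hz⟩ : ∃ z : ℤ, z ∉ S := by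
        by_contra hall
        push_neg at hall
        exact hSne ((AddSubgroup.eq_top_iff' _).mpr hall)
      intro habs
      apply hz
      have : Multiplicative.ofAdd z ∈ wordValues w (Multiplicative ℤ) := by
        rw [habs]; trivial
      obtain ⟨f, hf⟩ := this
      have hf' : (FreeGroup.lift fun i => Multiplicative.ofAdd (Multiplicative.toAdd (f i))) w
          = Multiplicative.ofAdd z := by simpa using hf
      have := congrArg Multiplicative.toAdd hf'
      rw [pairing_eq, ← ht] at this
      rw [← show t.sum (fun i a => Multiplicative.toAdd (f i) * a) = z from this]
      apply AddSubgroup.sum_mem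
      intro i hi
      show Multiplicative.toAdd (f i) * t i ∈ S
      rw [← smul_eq_mul]
      exact AddSubgroup.zsmul_mem _ (hrange i) _
end
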